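/- arXiv:2511.18536 — 4 statements merged into one kernel-verified Lean document; each statement's English description precedes it below -/
import Mathlib

section
/- Let $A \leq 0$, let $R : \mathbb{R} \to \mathbb{R}$ be $C^1$ with $|R(Y)| \leq \frac{1}{2}(1 + Y^2)$ and $|R'(Y)| \leq C_0(1+|Y|)$, and set $B(Y) = Y^2 + R(Y)$. Suppose $F \in H^2(\mathbb{R})$ with $Y^2 F \in L^2$ solves $[i(B(Y)-A) - \partial_Y^2]F = H \in L^2(\mathbb{R})$. Then $\int_{\mathbb{R}} (B(Y) - A)^2 |F|^2 \, dY \leq C \left( \|\langle Y \rangle F\|_{L^2} \|F'\|_{L^2} + \|H\|_{L^2}^2 \right)$ for some constant $C$ depending only on $C_0$, where $\langle Y \rangle = (1+Y^2)^{1/2}$. -/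
open MeasureTheory Filter Set Topology
open scoped ComplexConjugate


lemma limZeroAtTop {f : ℝ → ℝ} (hf : Integrable f) {m : ℝ}
    (h : Tendsto f atTop (𝓝 m)) : m = 0 := by
  by_contra hm
  obtain ⟨N, hN⟩ := (Metric.tendsto_atTop.1 h) (|m| / 2) (by positivity)
  have hc : IntegrableOn (fun _ : ℝ => |m| / 2) (Ioi N) volume := by
    refine Integrable.mono (hf.integrableOn (s := Ioi N)) aestronglyMeasurable_const ?_
    refine (ae_restrict_iff' measurableSet_Ioi).2 (Filter.Eventually.of_forall ?_)
    intro x hx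
    have h1 := hN x (le_of_lt hx)
    rw [Real.dist_eq] at h1
    simp only [Real.norm_eq_abs]
    have h2 := abs_sub_abs_le_abs_sub m (f x)
    rw [abs_sub_comm] at h2
    have h3 : 0 ≤ |m| / 2 := by positivity
    rw [abs_of_nonneg h3]
    linarith
  rcases integrable_const_iff.mp hc with h0 | hfin
  · exact hm (by cases abs_cases m <;> simp_all <;> linarith)
  · have hfin := hfin.measure_univ_lt_top
    rw [Measure.restrict_apply_univ, Real.volume_Ioi] at hfin
    exact (lt_irrefl _ hfin)

lemma limZeroAtBot {f : ℝ → ℝ} (hf : Integrable f) {m : ℝ}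
    (h : Tendsto f atBot (𝓝 m)) : m = 0 := by
  have : Tendsto (fun x : ℝ => f (-x)) atTop (𝓝 m) := h.comp tendsto_neg_atTop_atBot
  exact limZeroAtTop (by simpa using hf.comp_neg) this

lemma intMul {u v : ℝ → ℝ} (hu : ∀ x, 0 ≤ u x) (hv : ∀ x, 0 ≤ v x)
    (hum : AEStronglyMeasurable u volume) (hvm : AEStronglyMeasurable v volume)
    (hu2 : Integrable (fun x => u x ^ 2)) (hv2 : Integrable (fun x => v x ^ 2)) :
    Integrable (fun x => u x * v x) := by
  refine Integrable.mono' ((hu2.add hv2).const_mul (1/2)) (hum.mul hvm) ?_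
  refine Filter.Eventually.of_forall fun x => ?_
  rw [Real.norm_eq_abs, abs_of_nonneg (mul_nonneg (hu x) (hv x))]
  simp only [Pi.add_apply]
  nlinarith [sq_nonneg (u x - v x)]

lemma myCS {u v : ℝ → ℝ} (hu : ∀ x, 0 ≤ u x) (hv : ∀ x, 0 ≤ v x)
    (hum : AEStronglyMeasurable u volume) (hvm : AEStronglyMeasurable v volume)
    (hu2 : Integrable (fun x => u x ^ 2)) (hv2 : Integrable (fun x => v x ^ 2)) :
    ∫ x, u x * v x ≤ Real.sqrt (∫ x, u x ^ 2) * Real.sqrt (∫ x, v x ^ 2) := by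
  set S := ∫ x, u x ^ 2 with hS
  set T := ∫ x, v x ^ 2 with hT
  have hS0 : 0 ≤ S := integral_nonneg fun x => sq_nonneg _
  have hT0 : 0 ≤ T := integral_nonneg fun x => sq_nonneg _
  have huv := intMul hu hv hum hvm hu2 hv2
  have key : ∀ ε : ℝ, 0 < ε → ∫ x, u x * v x ≤ (ε * S + T / ε) / 2 := by
    intro ε hε
    have hle : ∀ x, u x * v x ≤ (ε * u x ^ 2 + v x ^ 2 / ε) / 2 := by
      intro x
      have h2 : 2 * ε * (u x * v x) ≤ ε ^ 2 * u x ^ 2 + v x ^ 2 := by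
        nlinarith [sq_nonneg (ε * u x - v x)]
      have hX : (ε * u x ^ 2 + v x ^ 2 / ε) / 2 = (ε ^ 2 * u x ^ 2 + v x ^ 2) / (2 * ε) := by
        field_simp
      rw [hX, le_div_iff₀ (by positivity)]
      linarith
    have hint : Integrable (fun x => (ε * u x ^ 2 + v x ^ 2 / ε) / 2) :=
      ((hu2.const_mul ε).add (hv2.div_const ε)).div_const 2
    calc ∫ x, u x * v x ≤ ∫ x, (ε * u x ^ 2 + v x ^ 2 / ε) / 2 :=
          integral_mono huv hint hle
      _ = (ε * S + T / ε) / 2 := by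
          rw [integral_div, integral_add (hu2.const_mul ε) (hv2.div_const ε),
            integral_const_mul, integral_div]
  rcases eq_or_lt_of_le hS0 with hSz | hSp
  · have htend : Tendsto (fun ε : ℝ => (ε * S + T / ε) / 2) atTop (𝓝 0) := by
      rw [← hSz]
      have h1 : Tendsto (fun _ : ℝ => (0:ℝ)) atTop (𝓝 0) := tendsto_const_nhds
      have h2 : Tendsto (fun ε : ℝ => T / ε) atTop (𝓝 0) :=
        Tendsto.div_atTop tendsto_const_nhds tendsto_id
      simpa using (h1.add h2).div_const 2
    have hP : ∫ x, u x * v x ≤ 0 :=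
      ge_of_tendsto htend ((eventually_gt_atTop 0).mono fun ε hε => key ε hε)
    exact hP.trans (by positivity)
  · rcases eq_or_lt_of_le hT0 with hTz | hTp
    · have htend : Tendsto (fun ε : ℝ => (ε * S + T / ε) / 2) (𝓝[>] (0:ℝ)) (𝓝 0) := by
        rw [← hTz]
        have h3 : Tendsto (fun ε : ℝ => ε * S / 2) (𝓝 (0:ℝ)) (𝓝 (0 * S / 2)) :=
          ((continuous_id.mul continuous_const).div_const 2).tendsto (0:ℝ)
        have h4 : Tendsto (fun ε : ℝ => (ε * S + 0 / ε) / 2) (𝓝 (0:ℝ)) (𝓝 0) := by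
          simp only [zero_div, add_zero]
          simpa using h3
        exact h4.mono_left nhdsWithin_le_nhds
      have hP : ∫ x, u x * v x ≤ 0 := by
        refine ge_of_tendsto htend ?_
        filter_upwards [self_mem_nhdsWithin] with ε hε
        exact key ε hε
      exact hP.trans (by positivity)
    · have hsS : Real.sqrt S > 0 := Real.sqrt_pos.2 hSp
      have hsT : Real.sqrt T > 0 := Real.sqrt_pos.2 hTp
      have hSe : Real.sqrt S * Real.sqrt S = S := Real.mul_self_sqrt hS0
      have hTe : Real.sqrt T * Real.sqrt T = T := Real.mul_self_sqrt hT0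
      have hkey := key (Real.sqrt T / Real.sqrt S) (by positivity)
      have heq : ((Real.sqrt T / Real.sqrt S) * S + T / (Real.sqrt T / Real.sqrt S)) / 2
          = Real.sqrt S * Real.sqrt T := by
        field_simp
        linear_combination (-(Real.sqrt T ^ 2)) * hSe + (-(Real.sqrt S ^ 2)) * hTe
      rw [heq] at hkey
      exact hkey

lemma intAdd {f g : ℝ → ℝ} (hf : Integrable f) (hg : Integrable g) :
    Integrable (fun x => f x + g x) := hf.add hg

lemma intSub {f g : ℝ → ℝ} (hf : Integrable f) (hg : Integrable g) :
    Integrable (fun x => f x - g x) := hf.sub hg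

/-- Imaginary-part energy estimate (eq:mygoodestforlem): with `A ≤ 0`,
`B(Y) = Y² + R(Y)`, `|R(Y)| ≤ (1/2)(1+Y²)`, `|R'(Y)| ≤ C₀(1+|Y|)`, and
`F ∈ H²` with `Y²F ∈ L²` solving `[i(B(Y)-A)-∂²_Y]F = H`, one has
`∫ (B-A)²|F|² ≤ C (‖⟨Y⟩F‖_{L²} ‖F'‖_{L²} + ‖H‖²_{L²})` with `C = C(C₀)`. -/
theorem stmt7 : ∀ C₀ : ℝ, 0 < C₀ → ∃ C : ℝ, 0 < C ∧
    ∀ (A : ℝ), A ≤ 0 →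
    ∀ (R R' : ℝ → ℝ),
    (∀ Y, HasDerivAt R (R' Y) Y) →
    (∀ Y, |R Y| ≤ (1/2) * (1 + Y ^ 2)) →
    (∀ Y, |R' Y| ≤ C₀ * (1 + |Y|)) →
    ∀ (F F' F'' H : ℝ → ℂ),
    (∀ Y, HasDerivAt F (F' Y) Y) →
    (∀ Y, HasDerivAt F' (F'' Y) Y) →
    Integrable (fun Y => ‖F Y‖ ^ 2) →
    Integrable (fun Y => ‖F' Y‖ ^ 2) →
    Integrable (fun Y => ‖F'' Y‖ ^ 2) →
    Integrable (fun Y : ℝ => ‖(Y : ℂ) ^ 2 * F Y‖ ^ 2) →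
    Integrable (fun Y => ‖H Y‖ ^ 2) →
    (∀ Y : ℝ, Complex.I * (((Y ^ 2 + R Y - A : ℝ)) : ℂ) * F Y - F'' Y = H Y) →
    (∫ Y : ℝ, (Y ^ 2 + R Y - A) ^ 2 * ‖F Y‖ ^ 2)
      ≤ C * (Real.sqrt (∫ Y : ℝ, (1 + Y ^ 2) * ‖F Y‖ ^ 2) *
              Real.sqrt (∫ Y : ℝ, ‖F' Y‖ ^ 2)
            + ∫ Y : ℝ, ‖H Y‖ ^ 2) := by
  intro C₀ hC₀
  refine ⟨4 * C₀ + 9, by linarith, ?_⟩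
  intro A hA R R' hR hRb hR'b F F' F'' H hF hF' hIF hIF' hIF'' hIY2F hIH hEq
  -- key pointwise identity
  have key : ∀ Y : ℝ, ((Y ^ 2 + R Y - A : ℝ) : ℂ) * F Y = -Complex.I * (H Y + F'' Y) := by
    intro Y
    linear_combination (-Complex.I) * (hEq Y) +
      (((Y ^ 2 + R Y - A : ℝ) : ℂ) * F Y) * Complex.I_mul_I
  have normkey : ∀ Y : ℝ, (Y ^ 2 + R Y - A) ^ 2 * ‖F Y‖ ^ 2 = ‖H Y + F'' Y‖ ^ 2 := by
    intro Y
    have h1 : ‖((Y ^ 2 + R Y - A : ℝ) : ℂ) * F Y‖ = ‖H Y + F'' Y‖ := by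
      rw [key Y, norm_mul, norm_neg, Complex.norm_I, one_mul]
    rw [← h1, norm_mul, Complex.norm_real, Real.norm_eq_abs, mul_pow, sq_abs]
  -- continuity / measurability
  have hFc : Continuous F := continuous_iff_continuousAt.2 fun Y => (hF Y).continuousAt
  have hF'c : Continuous F' := continuous_iff_continuousAt.2 fun Y => (hF' Y).continuousAt
  have hRc : Continuous R := continuous_iff_continuousAt.2 fun Y => (hR Y).continuousAt
  have mF'' : AEStronglyMeasurable F'' volume := by
    have : F'' = deriv F' := funext fun Y => ((hF' Y).deriv).symm
    rw [this]
    exact (stronglyMeasurable_deriv F').aestronglyMeasurable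
  have mR' : AEStronglyMeasurable R' volume := by
    have : R' = deriv R := funext fun Y => ((hR Y).deriv).symm
    rw [this]
    exact (stronglyMeasurable_deriv R).aestronglyMeasurable
  have mH : AEStronglyMeasurable H volume := by
    have : H = fun Y => Complex.I * ((Y ^ 2 + R Y - A : ℝ) : ℂ) * F Y - F'' Y :=
      funext fun Y => (hEq Y).symm
    rw [this]
    refine AEStronglyMeasurable.sub ?_ mF''
    exact ((aestronglyMeasurable_const.mul
      ((Complex.continuous_ofReal.comp (by continuity)).aestronglyMeasurable)).mul
      hFc.aestronglyMeasurable)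
  -- integrability of ‖H + F''‖²
  have hHF'' : Integrable (fun Y => ‖H Y + F'' Y‖ ^ 2) := by
    refine Integrable.mono' ((hIH.add hIF'').const_mul 2) ?_ ?_
    · exact ((mH.add mF'').norm.aemeasurable.pow_const 2).aestronglyMeasurable
    · refine Filter.Eventually.of_forall fun Y => ?_
      simp only [Pi.add_apply, Real.norm_eq_abs]
      rw [abs_of_nonneg (sq_nonneg _)]
      have h1 : ‖H Y + F'' Y‖ ^ 2 ≤ (‖H Y‖ + ‖F'' Y‖) ^ 2 :=
        pow_le_pow_left₀ (norm_nonneg _) (norm_add_le (H Y) (F'' Y)) 2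
      nlinarith [sq_nonneg (‖H Y‖ - ‖F'' Y‖)]
  have hbF2 : Integrable (fun Y : ℝ => (Y ^ 2 + R Y - A) ^ 2 * ‖F Y‖ ^ 2) :=
    hHF''.congr (Filter.Eventually.of_forall fun Y => (normkey Y).symm)
  -- integrability of (1+Y²)‖F‖²
  have h1Y2F : Integrable (fun Y : ℝ => (1 + Y ^ 2) * ‖F Y‖ ^ 2) := by
    refine Integrable.mono' ((hIF.const_mul (3/2)).add (hIY2F.const_mul (1/2))) ?_ ?_
    · exact ((continuous_const.add (continuous_pow 2)).mul
        ((hFc.norm.pow 2))).aestronglyMeasurable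
    · refine Filter.Eventually.of_forall fun Y => ?_
      have hY4 : ‖(Y : ℂ) ^ 2 * F Y‖ ^ 2 = Y ^ 4 * ‖F Y‖ ^ 2 := by
        rw [norm_mul, mul_pow, norm_pow, Complex.norm_real, Real.norm_eq_abs]
        rw [show (|Y| ^ 2) ^ 2 = |Y| ^ 4 by ring, ← abs_pow,
          abs_of_nonneg (by positivity : (0:ℝ) ≤ Y ^ 4)]
      simp only [Pi.add_apply, Real.norm_eq_abs]
      rw [abs_of_nonneg (by positivity : (0:ℝ) ≤ (1 + Y ^ 2) * ‖F Y‖ ^ 2), hY4]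
      nlinarith [sq_nonneg ((Y ^ 2 - 1) * ‖F Y‖), norm_nonneg (F Y), sq_nonneg (‖F Y‖)]
  -- flux function φ and its derivative g
  have hφderiv : ∀ Y : ℝ,
      HasDerivAt (fun y : ℝ => (F' y * ((y ^ 2 + R y - A : ℝ) : ℂ) * (starRingEnd ℂ) (F y)).im)
        ((Y ^ 2 + R Y - A) ^ 2 * ‖F Y‖ ^ 2
          + (((2 * Y + R' Y : ℝ) : ℂ) * (F' Y * (starRingEnd ℂ) (F Y))).im
          - (((Y ^ 2 + R Y - A : ℝ) : ℂ) * (H Y * (starRingEnd ℂ) (F Y))).im) Y := by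
    intro Y
    have hb : HasDerivAt (fun y : ℝ => y ^ 2 + R y - A) (2 * Y + R' Y) Y := by
      have := ((hasDerivAt_pow 2 Y).add (hR Y)).sub_const A
      simpa using this
    have hbC : HasDerivAt (fun y : ℝ => ((y ^ 2 + R y - A : ℝ) : ℂ))
        (((2 * Y + R' Y : ℝ) : ℂ)) Y := hb.ofReal_comp
    have hstar : HasDerivAt (fun y => (starRingEnd ℂ) (F y)) ((starRingEnd ℂ) (F' Y)) Y := by
      simpa only [Complex.star_def] using (hF Y).star
    have hG := ((hF' Y).mul hbC).mul hstar
    have hφd := (Complex.imCLM.hasFDerivAt.comp_hasDerivAt Y hG)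
    have hF''eq : F'' Y = Complex.I * ((Y ^ 2 + R Y - A : ℝ) : ℂ) * F Y - H Y := by
      linear_combination (-1 : ℂ) * hEq Y
    convert hφd using 1
    case e'_4 => rfl
    case e'_5 => rfl
    case e'_8 => rfl
    rw [hF''eq]
    simp only [Complex.imCLM_apply, Complex.sq_norm, Complex.normSq_apply, Pi.mul_apply]
    simp only [pow_two, Complex.add_im, Complex.sub_im, Complex.add_re, Complex.sub_re,
      Complex.mul_im, Complex.mul_re, Complex.I_re, Complex.I_im, Complex.ofReal_re,
      Complex.ofReal_im, Complex.conj_re, Complex.conj_im]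
    ring
  -- pointwise norm facts
  have habsim : ∀ z : ℂ, |z.im| ≤ ‖z‖ := fun z =>
    le_of_le_of_eq (Complex.abs_im_le_norm z) rfl
  have hnorm1 : ∀ Y : ℝ, |Y ^ 2 + R Y - A| * ‖F Y‖ = ‖H Y + F'' Y‖ := by
    intro Y
    have h1 : ‖((Y ^ 2 + R Y - A : ℝ) : ℂ) * F Y‖ = ‖H Y + F'' Y‖ := by
      rw [key Y, norm_mul, norm_neg, Complex.norm_I, one_mul]
    rw [← h1, norm_mul, Complex.norm_real, Real.norm_eq_abs]
  have hconjFc : Continuous fun Y => (starRingEnd ℂ) (F Y) := by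
    have h : Continuous fun Y => star (F Y) := continuous_star.comp hFc
    simpa only [Complex.star_def] using h
  have hbcont : Continuous fun Y : ℝ => ((Y ^ 2 + R Y - A : ℝ) : ℂ) :=
    Complex.continuous_ofReal.comp (((continuous_pow 2).add hRc).sub continuous_const)
  -- sqrt bound
  have hsqrt2 : ∀ Y : ℝ, 1 + |Y| ≤ 2 * Real.sqrt (1 + Y ^ 2) := by
    intro Y
    have h1 : (1 + |Y|) = Real.sqrt ((1 + |Y|) ^ 2) := (Real.sqrt_sq (by positivity)).symm
    have h2 : Real.sqrt ((1 + |Y|) ^ 2) ≤ Real.sqrt (4 * (1 + Y ^ 2)) := by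
      apply Real.sqrt_le_sqrt
      nlinarith [sq_abs Y, sq_nonneg (|Y| - 1)]
    have h3 : Real.sqrt (4 * (1 + Y ^ 2)) = 2 * Real.sqrt (1 + Y ^ 2) := by
      rw [show (4 : ℝ) * (1 + Y ^ 2) = 2 ^ 2 * (1 + Y ^ 2) by ring,
        Real.sqrt_mul (by positivity), Real.sqrt_sq (by norm_num)]
    linarith
  -- pointwise bound for the commutator term
  have hbd2 : ∀ Y : ℝ, |(((2 * Y + R' Y : ℝ) : ℂ) * (F' Y * (starRingEnd ℂ) (F Y))).im|
      ≤ 2 * (C₀ + 2) * (Real.sqrt (1 + Y ^ 2) * ‖F Y‖ * ‖F' Y‖) := by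
    intro Y
    have h2 : ‖(((2 * Y + R' Y : ℝ) : ℂ) * (F' Y * (starRingEnd ℂ) (F Y)))‖
        = |2 * Y + R' Y| * (‖F' Y‖ * ‖F Y‖) := by
      rw [norm_mul, norm_mul, Complex.norm_real, Real.norm_eq_abs, RCLike.norm_conj]
    have h3 : |2 * Y + R' Y| ≤ (C₀ + 2) * (1 + |Y|) := by
      have ha := hR'b Y
      have hb := abs_add_le (2 * Y) (R' Y)
      have hc : |2 * Y| = 2 * |Y| := by rw [abs_mul]; norm_num
      nlinarith [abs_nonneg Y]
    have h5 : |2 * Y + R' Y| * (‖F' Y‖ * ‖F Y‖) ≤ ((C₀ + 2) * (1 + |Y|)) * (‖F' Y‖ * ‖F Y‖) :=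
      mul_le_mul_of_nonneg_right h3 (by positivity)
    have h6 : ((C₀ + 2) * (1 + |Y|)) * (‖F' Y‖ * ‖F Y‖)
        ≤ ((C₀ + 2) * (2 * Real.sqrt (1 + Y ^ 2))) * (‖F' Y‖ * ‖F Y‖) := by
      apply mul_le_mul_of_nonneg_right _ (by positivity)
      exact mul_le_mul_of_nonneg_left (hsqrt2 Y) (by linarith)
    calc |(((2 * Y + R' Y : ℝ) : ℂ) * (F' Y * (starRingEnd ℂ) (F Y))).im|
        ≤ ‖(((2 * Y + R' Y : ℝ) : ℂ) * (F' Y * (starRingEnd ℂ) (F Y)))‖ := habsim _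
      _ = |2 * Y + R' Y| * (‖F' Y‖ * ‖F Y‖) := h2
      _ ≤ ((C₀ + 2) * (1 + |Y|)) * (‖F' Y‖ * ‖F Y‖) := h5
      _ ≤ ((C₀ + 2) * (2 * Real.sqrt (1 + Y ^ 2))) * (‖F' Y‖ * ‖F Y‖) := h6
      _ = 2 * (C₀ + 2) * (Real.sqrt (1 + Y ^ 2) * ‖F Y‖ * ‖F' Y‖) := by ring
  -- pointwise bound for the source term
  have hbd3 : ∀ Y : ℝ, |(((Y ^ 2 + R Y - A : ℝ) : ℂ) * (H Y * (starRingEnd ℂ) (F Y))).im|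
      ≤ 1 / 2 * ((Y ^ 2 + R Y - A) ^ 2 * ‖F Y‖ ^ 2) + 1 / 2 * ‖H Y‖ ^ 2 := by
    intro Y
    have h2 : ‖(((Y ^ 2 + R Y - A : ℝ) : ℂ) * (H Y * (starRingEnd ℂ) (F Y)))‖
        = (|Y ^ 2 + R Y - A| * ‖F Y‖) * ‖H Y‖ := by
      rw [norm_mul, norm_mul, Complex.norm_real, Real.norm_eq_abs, RCLike.norm_conj]; ring
    calc |(((Y ^ 2 + R Y - A : ℝ) : ℂ) * (H Y * (starRingEnd ℂ) (F Y))).im|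
        ≤ ‖(((Y ^ 2 + R Y - A : ℝ) : ℂ) * (H Y * (starRingEnd ℂ) (F Y)))‖ := habsim _
      _ = (|Y ^ 2 + R Y - A| * ‖F Y‖) * ‖H Y‖ := h2
      _ ≤ 1 / 2 * ((Y ^ 2 + R Y - A) ^ 2 * ‖F Y‖ ^ 2) + 1 / 2 * ‖H Y‖ ^ 2 := by
          nlinarith [sq_nonneg (|Y ^ 2 + R Y - A| * ‖F Y‖ - ‖H Y‖), sq_abs (Y ^ 2 + R Y - A)]
  -- measurability of the integrand pieces
  have mg2 : AEStronglyMeasurable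
      (fun Y : ℝ => (((2 * Y + R' Y : ℝ) : ℂ) * (F' Y * (starRingEnd ℂ) (F Y))).im) volume := by
    refine Complex.continuous_im.comp_aestronglyMeasurable ?_
    refine AEStronglyMeasurable.mul ?_ ((hF'c.mul hconjFc).aestronglyMeasurable)
    refine Complex.continuous_ofReal.comp_aestronglyMeasurable ?_
    exact ((continuous_const.mul continuous_id).aestronglyMeasurable).add mR'
  have mg3 : AEStronglyMeasurable
      (fun Y : ℝ => (((Y ^ 2 + R Y - A : ℝ) : ℂ) * (H Y * (starRingEnd ℂ) (F Y))).im) volume := by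
    refine Complex.continuous_im.comp_aestronglyMeasurable ?_
    exact hbcont.aestronglyMeasurable.mul (mH.mul hconjFc.aestronglyMeasurable)
  -- the weighted Cauchy-Schwarz data
  have hu2 : Integrable (fun Y : ℝ => (Real.sqrt (1 + Y ^ 2) * ‖F Y‖) ^ 2) := by
    refine h1Y2F.congr (Filter.Eventually.of_forall fun Y => ?_)
    have h : (Real.sqrt (1 + Y ^ 2) * ‖F Y‖) ^ 2 = (1 + Y ^ 2) * ‖F Y‖ ^ 2 := by
      rw [mul_pow, Real.sq_sqrt (by positivity)]
    simpa using h.symm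
  have humeas : AEStronglyMeasurable (fun Y : ℝ => Real.sqrt (1 + Y ^ 2) * ‖F Y‖) volume :=
    ((Real.continuous_sqrt.comp (continuous_const.add (continuous_pow 2))).mul
      hFc.norm).aestronglyMeasurable
  have huv : Integrable (fun Y : ℝ => Real.sqrt (1 + Y ^ 2) * ‖F Y‖ * ‖F' Y‖) :=
    intMul (fun Y => by positivity) (fun Y => norm_nonneg _) humeas
      hF'c.norm.aestronglyMeasurable hu2 hIF'
  -- integrability of the three pieces
  have hg2int : Integrable
      (fun Y : ℝ => (((2 * Y + R' Y : ℝ) : ℂ) * (F' Y * (starRingEnd ℂ) (F Y))).im) := by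
    refine Integrable.mono' (huv.const_mul (2 * (C₀ + 2))) mg2
      (Filter.Eventually.of_forall fun Y => ?_)
    rw [Real.norm_eq_abs]
    exact hbd2 Y
  have hg3int : Integrable
      (fun Y : ℝ => (((Y ^ 2 + R Y - A : ℝ) : ℂ) * (H Y * (starRingEnd ℂ) (F Y))).im) := by
    refine Integrable.mono'
      (g := fun Y : ℝ => 1 / 2 * ((Y ^ 2 + R Y - A) ^ 2 * ‖F Y‖ ^ 2) + 1 / 2 * ‖H Y‖ ^ 2)
      (intAdd (hbF2.const_mul (1/2)) (hIH.const_mul (1/2))) mg3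
      (Filter.Eventually.of_forall fun Y => ?_)
    rw [Real.norm_eq_abs]
    exact hbd3 Y
  have hgint : Integrable (fun Y : ℝ =>
      (Y ^ 2 + R Y - A) ^ 2 * ‖F Y‖ ^ 2
        + (((2 * Y + R' Y : ℝ) : ℂ) * (F' Y * (starRingEnd ℂ) (F Y))).im
        - (((Y ^ 2 + R Y - A : ℝ) : ℂ) * (H Y * (starRingEnd ℂ) (F Y))).im) :=
    intSub (intAdd hbF2 hg2int) hg3int
  -- integrability of φ
  have hφint : Integrable
      (fun Y : ℝ => (F' Y * ((Y ^ 2 + R Y - A : ℝ) : ℂ) * (starRingEnd ℂ) (F Y)).im) := by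
    refine Integrable.mono'
      (g := fun Y : ℝ => 1 / 2 * ‖F' Y‖ ^ 2 + 1 / 2 * ‖H Y + F'' Y‖ ^ 2)
      (intAdd (hIF'.const_mul (1/2)) (hHF''.const_mul (1/2)))
      (Complex.continuous_im.comp ((hF'c.mul hbcont).mul hconjFc)).aestronglyMeasurable
      (Filter.Eventually.of_forall fun Y => ?_)
    rw [Real.norm_eq_abs]
    have h2 : ‖F' Y * ((Y ^ 2 + R Y - A : ℝ) : ℂ) * (starRingEnd ℂ) (F Y)‖
        = ‖F' Y‖ * (|Y ^ 2 + R Y - A| * ‖F Y‖) := by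
      rw [norm_mul, norm_mul, Complex.norm_real, Real.norm_eq_abs, RCLike.norm_conj]; ring
    calc |(F' Y * ((Y ^ 2 + R Y - A : ℝ) : ℂ) * (starRingEnd ℂ) (F Y)).im|
        ≤ ‖F' Y * ((Y ^ 2 + R Y - A : ℝ) : ℂ) * (starRingEnd ℂ) (F Y)‖ := habsim _
      _ = ‖F' Y‖ * ‖H Y + F'' Y‖ := by rw [h2, hnorm1 Y]
      _ ≤ 1 / 2 * ‖F' Y‖ ^ 2 + 1 / 2 * ‖H Y + F'' Y‖ ^ 2 := by
          nlinarith [sq_nonneg (‖F' Y‖ - ‖H Y + F'' Y‖)]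
  -- total integral of the derivative is zero
  have hTop : Tendsto
      (fun y : ℝ => (F' y * ((y ^ 2 + R y - A : ℝ) : ℂ) * (starRingEnd ℂ) (F y)).im) atTop (𝓝 0) := by
    have h := tendsto_limUnder_of_hasDerivAt_of_integrableOn_Ioi (a := 0)
      (fun x _ => hφderiv x) hgint.integrableOn
    rwa [limZeroAtTop hφint h] at h
  have hBot : Tendsto
      (fun y : ℝ => (F' y * ((y ^ 2 + R y - A : ℝ) : ℂ) * (starRingEnd ℂ) (F y)).im) atBot (𝓝 0) := by
    have h := tendsto_limUnder_of_hasDerivAt_of_integrableOn_Iic (a := 0)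
      (fun x _ => hφderiv x) hgint.integrableOn
    rwa [limZeroAtBot hφint h] at h
  have hIoi := integral_Ioi_of_hasDerivAt_of_tendsto' (a := 0)
    (fun x _ => hφderiv x) hgint.integrableOn hTop
  have hIic := integral_Iic_of_hasDerivAt_of_tendsto' (a := 0)
    (fun x _ => hφderiv x) hgint.integrableOn hBot
  have htot : ∫ Y : ℝ,
      ((Y ^ 2 + R Y - A) ^ 2 * ‖F Y‖ ^ 2
        + (((2 * Y + R' Y : ℝ) : ℂ) * (F' Y * (starRingEnd ℂ) (F Y))).im
        - (((Y ^ 2 + R Y - A : ℝ) : ℂ) * (H Y * (starRingEnd ℂ) (F Y))).im) = 0 := by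
    rw [← intervalIntegral.integral_Iic_add_Ioi (b := 0) hgint.integrableOn hgint.integrableOn, hIoi, hIic]
    ring
  have hsplit : (∫ Y : ℝ, (Y ^ 2 + R Y - A) ^ 2 * ‖F Y‖ ^ 2)
      + (∫ Y : ℝ, (((2 * Y + R' Y : ℝ) : ℂ) * (F' Y * (starRingEnd ℂ) (F Y))).im)
      - (∫ Y : ℝ, (((Y ^ 2 + R Y - A : ℝ) : ℂ) * (H Y * (starRingEnd ℂ) (F Y))).im) = 0 := by
    rw [← integral_add hbF2 hg2int, ← integral_sub (intAdd hbF2 hg2int) hg3int]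
    exact htot
  -- Cauchy-Schwarz estimate
  have hCS : (∫ Y : ℝ, Real.sqrt (1 + Y ^ 2) * ‖F Y‖ * ‖F' Y‖)
      ≤ Real.sqrt (∫ Y : ℝ, (1 + Y ^ 2) * ‖F Y‖ ^ 2) * Real.sqrt (∫ Y : ℝ, ‖F' Y‖ ^ 2) := by
    have h := myCS (u := fun Y : ℝ => Real.sqrt (1 + Y ^ 2) * ‖F Y‖) (v := fun Y => ‖F' Y‖)
      (fun Y => by positivity) (fun Y => norm_nonneg _) humeas hF'c.norm.aestronglyMeasurable
      hu2 hIF'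
    have heq : (∫ Y : ℝ, (Real.sqrt (1 + Y ^ 2) * ‖F Y‖) ^ 2)
        = ∫ Y : ℝ, (1 + Y ^ 2) * ‖F Y‖ ^ 2 := by
      refine integral_congr_ae (Filter.Eventually.of_forall fun Y => ?_)
      have h : (Real.sqrt (1 + Y ^ 2) * ‖F Y‖) ^ 2 = (1 + Y ^ 2) * ‖F Y‖ ^ 2 := by
        rw [mul_pow, Real.sq_sqrt (by positivity)]
      simpa using h
    rwa [heq] at h
  -- the commutator-term estimate
  have e2 : -(∫ Y : ℝ, (((2 * Y + R' Y : ℝ) : ℂ) * (F' Y * (starRingEnd ℂ) (F Y))).im)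
      ≤ 2 * (C₀ + 2) * ∫ Y : ℝ, Real.sqrt (1 + Y ^ 2) * ‖F Y‖ * ‖F' Y‖ := by
    rw [← integral_neg, ← integral_const_mul]
    refine integral_mono hg2int.neg (huv.const_mul (2 * (C₀ + 2))) fun Y => ?_
    have := hbd2 Y
    have h := neg_abs_le ((((2 * Y + R' Y : ℝ) : ℂ) * (F' Y * (starRingEnd ℂ) (F Y))).im)
    simp only
    linarith
  -- the source-term estimate
  have e3 : (∫ Y : ℝ, (((Y ^ 2 + R Y - A : ℝ) : ℂ) * (H Y * (starRingEnd ℂ) (F Y))).im)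
      ≤ 1 / 2 * (∫ Y : ℝ, (Y ^ 2 + R Y - A) ^ 2 * ‖F Y‖ ^ 2) + 1 / 2 * ∫ Y : ℝ, ‖H Y‖ ^ 2 := by
    have hmono := integral_mono hg3int
      (f := fun Y : ℝ => (((Y ^ 2 + R Y - A : ℝ) : ℂ) * (H Y * (starRingEnd ℂ) (F Y))).im)
      (g := fun Y : ℝ => 1 / 2 * ((Y ^ 2 + R Y - A) ^ 2 * ‖F Y‖ ^ 2) + 1 / 2 * ‖H Y‖ ^ 2)
      (intAdd (hbF2.const_mul (1/2)) (hIH.const_mul (1/2)))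
      (fun Y => (le_abs_self _).trans (hbd3 Y))
    rwa [integral_add (hbF2.const_mul (1/2)) (hIH.const_mul (1/2)),
      integral_const_mul, integral_const_mul] at hmono
  -- final arithmetic
  have hS1 : 0 ≤ Real.sqrt (∫ Y : ℝ, (1 + Y ^ 2) * ‖F Y‖ ^ 2) * Real.sqrt (∫ Y : ℝ, ‖F' Y‖ ^ 2) :=
    mul_nonneg (Real.sqrt_nonneg _) (Real.sqrt_nonneg _)
  have hT2 : 0 ≤ ∫ Y : ℝ, ‖H Y‖ ^ 2 := integral_nonneg fun Y => by positivity
  have hscaled : 2 * (C₀ + 2) * (∫ Y : ℝ, Real.sqrt (1 + Y ^ 2) * ‖F Y‖ * ‖F' Y‖)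
      ≤ 2 * (C₀ + 2) * (Real.sqrt (∫ Y : ℝ, (1 + Y ^ 2) * ‖F Y‖ ^ 2)
        * Real.sqrt (∫ Y : ℝ, ‖F' Y‖ ^ 2)) :=
    mul_le_mul_of_nonneg_left hCS (by linarith)
  nlinarith [mul_nonneg hC₀.le hT2, mul_nonneg hC₀.le hS1]
end

section
/- Let $b : \mathbb{T} \to \mathbb{R}$ be $C^1$ with $|b'(y)| \geq m > 0$ on an open set $U \subseteq \mathbb{T}$, and let $\lambda \in \mathbb{R}$. Then for every $f \in H^1_0(U)$ (extended by zero) and every $L > 0$ with $L \leq $ the minimal distance between distinct zeros of $b - \lambda$ in $\bar{U}$, one has $\int_{\mathbb{T}} |f|^2 \leq C\left( L^2 \int_{\mathbb{T}} |f'|^2 + \frac{1}{mL} \int_{\mathbb{T}} |b(y) - \lambda| |f|^2 \right)$, with $C$ depending only on the number of zeros of $b - \lambda$ in $\bar{U}$ and the $C^1$ norm of $b$. -/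
open MeasureTheory Set intervalIntegral

set_option maxHeartbeats 2000000

lemma periodic_deriv' {f : ℝ → ℂ} (hf : Function.Periodic f (2*Real.pi)) :
    Function.Periodic (deriv f) (2*Real.pi) := by
  intro x
  have : (fun y => f (y + 2*Real.pi)) = f := funext fun y => hf y
  calc deriv f (x + 2*Real.pi) = deriv (fun y => f (y + 2*Real.pi)) x := by
        rw [deriv_comp_add_const]
    _ = deriv f x := by rw [this]

lemma dichotomyPos (b : ℝ → ℝ) (hb : ContDiff ℝ 1 b) {m lam : ℝ} (hm : 0 < m)
    {y ρ : ℝ} (hρ0 : 0 ≤ ρ) (hρ : |b y - lam| ≤ m * ρ)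
    (hder : ∀ w ∈ Icc (y-ρ) (y+ρ), m ≤ |deriv b w|)
    (hpos : 0 < deriv b y)
    (hbne : ∀ w ∈ Icc (y-ρ) (y+ρ), b w ≠ lam) : False := by
  have hyI : y ∈ Icc (y-ρ) (y+ρ) := ⟨by linarith, by linarith⟩
  have hcd : Continuous (deriv b) := hb.continuous_deriv le_rfl
  have hcb : Continuous b := hb.continuous
  -- sign constancy
  have pos : ∀ w ∈ Icc (y-ρ) (y+ρ), m ≤ deriv b w := by
    intro w hw
    rcases lt_or_ge (deriv b w) 0 with hneg | hge
    · exfalso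
      have hsub : uIcc w y ⊆ Icc (y-ρ) (y+ρ) := uIcc_subset_Icc hw hyI
      have : (0:ℝ) ∈ uIcc (deriv b w) (deriv b y) :=
        mem_uIcc.2 (Or.inl ⟨hneg.le, hpos.le⟩)
      obtain ⟨z, hz, hz0⟩ := intermediate_value_uIcc (hcd.continuousOn (s := uIcc w y)) this
      have := hder z (hsub hz)
      rw [hz0] at this
      simp at this
      linarith
    · have := hder w hw
      rwa [abs_of_nonneg hge] at this
  -- FTC lower bound
  have key : ∀ u v : ℝ, u ∈ Icc (y-ρ) (y+ρ) → v ∈ Icc (y-ρ) (y+ρ) → u ≤ v →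
      m * (v - u) ≤ b v - b u := by
    intro u v hu hv huv
    have hIcc : uIcc u v ⊆ Icc (y-ρ) (y+ρ) := uIcc_subset_Icc hu hv
    have hftc : ∫ x in u..v, deriv b x = b v - b u :=
      integral_deriv_eq_sub (fun x _ => (hb.differentiable one_ne_zero).differentiableAt)
        (hcd.intervalIntegrable u v)
    have hmono : ∫ x in u..v, (m : ℝ) ≤ ∫ x in u..v, deriv b x := by
      apply integral_mono_on huv (intervalIntegrable_const) (hcd.intervalIntegrable u v)
      intro x hx
      exact pos x (hIcc (by rw [uIcc_of_le huv]; exact hx))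
    rw [hftc] at hmono
    simpa [smul_eq_mul, mul_comm] using hmono
  rcases lt_trichotomy (b y) lam with hlt | heq | hgt
  · -- b y < lam : look right
    have h1 : m * ρ ≤ b (y+ρ) - b y := by
      have := key y (y+ρ) hyI ⟨by linarith, le_refl _⟩ (by linarith)
      simpa using this
    have h2 : lam - b y ≤ m * ρ := by
      rw [abs_of_nonpos (by linarith)] at hρ; linarith
    have h3 : lam < b (y+ρ) := by
      rcases lt_or_eq_of_le (by linarith : lam ≤ b (y+ρ)) with h | h
      · exact h
      · exact absurd h.symm (hbne _ ⟨by linarith, le_refl _⟩)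
    have : lam ∈ uIcc (b y) (b (y+ρ)) := mem_uIcc.2 (Or.inl ⟨hlt.le, h3.le⟩)
    obtain ⟨w, hw, hweq⟩ := intermediate_value_uIcc (hcb.continuousOn (s := uIcc y (y+ρ))) this
    exact hbne w (uIcc_subset_Icc hyI ⟨by linarith, le_refl _⟩ hw) hweq
  · exact hbne y hyI heq
  · -- b y > lam : look left
    have h1 : m * ρ ≤ b y - b (y-ρ) := by
      have := key (y-ρ) y ⟨le_refl _, by linarith⟩ hyI (by linarith)
      simpa using this
    have h2 : b y - lam ≤ m * ρ := by
      rw [abs_of_nonneg (by linarith)] at hρ; linarith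
    have h3 : b (y-ρ) < lam := by
      rcases lt_or_eq_of_le (by linarith : b (y-ρ) ≤ lam) with h | h
      · exact h
      · exact absurd h (hbne _ ⟨le_refl _, by linarith⟩)
    have : lam ∈ uIcc (b (y-ρ)) (b y) := mem_uIcc.2 (Or.inl ⟨h3.le, hgt.le⟩)
    obtain ⟨w, hw, hweq⟩ := intermediate_value_uIcc (hcb.continuousOn (s := uIcc (y-ρ) y)) this
    exact hbne w (uIcc_subset_Icc ⟨le_refl _, by linarith⟩ hyI hw) hweq

lemma dichotomy (b : ℝ → ℝ) (hb : ContDiff ℝ 1 b) {m lam : ℝ} (hm : 0 < m)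
    {y ρ : ℝ} (hρ0 : 0 ≤ ρ) (hρ : |b y - lam| ≤ m * ρ)
    (hder : ∀ w ∈ Icc (y-ρ) (y+ρ), m ≤ |deriv b w|)
    (hbne : ∀ w ∈ Icc (y-ρ) (y+ρ), b w ≠ lam) : False := by
  have hyI : y ∈ Icc (y-ρ) (y+ρ) := ⟨by linarith, by linarith⟩
  have hdn : deriv (fun x => -(b x)) = fun x => -(deriv b x) := by
    funext x; exact deriv.neg
  rcases lt_trichotomy (deriv b y) 0 with hneg | h0 | hpos
  · refine dichotomyPos (fun x => -(b x)) hb.neg (lam := -lam) (y := y) hm hρ0 ?_ ?_ ?_ ?_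
    · show |-(b y) - (-lam)| ≤ m * ρ
      rw [show -(b y) - -lam = -(b y - lam) by ring, abs_neg]; exact hρ
    · intro w hw; rw [hdn]; simpa [abs_neg] using hder w hw
    · rw [hdn]; simpa using hneg
    · intro w hw h
      exact hbne w hw (by linarith [neg_eq_iff_eq_neg.mp h])
  · have := hder y hyI; rw [h0] at this; simp at this; linarith
  · exact dichotomyPos b hb hm hρ0 hρ hder hpos hbne

lemma conv_id (g : ℝ → ℝ) (hg : Continuous g) (hper : Function.Periodic g (2*Real.pi))
    {l : ℝ} (hl : 0 ≤ l) :
    ∫ y in (0:ℝ)..(2*Real.pi), (∫ t in (y-l)..(y+l), g t)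
      = 2*l*∫ t in (0:ℝ)..(2*Real.pi), g t := by
  set G : ℝ → ℝ := fun x => ∫ t in (0:ℝ)..x, g t with hG
  have hgi : ∀ a b : ℝ, IntervalIntegrable g volume a b := fun a b => hg.intervalIntegrable a b
  have hGc : Continuous G := intervalIntegral.continuous_primitive hgi 0
  have hGi : ∀ a b : ℝ, IntervalIntegrable G volume a b := fun a b => hGc.intervalIntegrable a b
  have hc1 : Continuous fun y : ℝ => G (y + l) := hGc.comp (by continuity)
  have hc2 : Continuous fun y : ℝ => G (y - l) := hGc.comp (by continuity)
  have hc3 : Continuous fun y : ℝ => G (y + 2*Real.pi) := hGc.comp (by continuity)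
  have inner : ∀ y : ℝ, (∫ t in (y-l)..(y+l), g t) = G (y+l) - G (y-l) := by
    intro y
    exact (integral_interval_sub_left (hgi 0 (y+l)) (hgi 0 (y-l))).symm
  have hD : ∀ t : ℝ, G (t + 2*Real.pi) - G t = ∫ t in (0:ℝ)..(2*Real.pi), g t := by
    intro t
    have h1 : G (t + 2*Real.pi) - G t = ∫ x in t..(t + 2*Real.pi), g x :=
      integral_interval_sub_left (hgi 0 _) (hgi 0 t)
    rw [h1, hper.intervalIntegral_add_eq t 0]
    norm_num
  calc ∫ y in (0:ℝ)..(2*Real.pi), (∫ t in (y-l)..(y+l), g t)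
      = ∫ y in (0:ℝ)..(2*Real.pi), (G (y+l) - G (y-l)) := by
        congr 1; funext y; exact inner y
    _ = (∫ y in (0:ℝ)..(2*Real.pi), G (y+l)) - ∫ y in (0:ℝ)..(2*Real.pi), G (y-l) := by
        apply intervalIntegral.integral_sub (hc1.intervalIntegrable _ _)
          (hc2.intervalIntegrable _ _)
    _ = (∫ y in (0+l)..(2*Real.pi+l), G y) - ∫ y in (0 + -l)..(2*Real.pi + -l), G y := by
        have e1 : (∫ y in (0:ℝ)..(2*Real.pi), G (y+l)) = ∫ y in (0+l)..(2*Real.pi+l), G y :=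
          integral_comp_add_right (a := (0:ℝ)) (b := 2*Real.pi) (f := G) l
        have e2 : (∫ y in (0:ℝ)..(2*Real.pi), G (y-l))
            = ∫ y in (0 + -l)..(2*Real.pi + -l), G y := by
          simpa [sub_eq_add_neg] using
            integral_comp_add_right (a := (0:ℝ)) (b := 2*Real.pi) (f := G) (-l)
        rw [e1, e2]
    _ = (∫ y in (2*Real.pi - l)..(2*Real.pi+l), G y) - ∫ y in (-l)..l, G y := by
        have h1 := integral_add_adjacent_intervals (hGi (-l) l) (hGi l (2*Real.pi+l))
        have h2 := integral_add_adjacent_intervals (hGi (-l) (2*Real.pi - l))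
          (hGi (2*Real.pi - l) (2*Real.pi+l))
        have h3 : (2*Real.pi + -l) = 2*Real.pi - l := by ring
        have h4 : (0:ℝ) + l = l := by ring
        have h5 : (0:ℝ) + -l = -l := by ring
        rw [h3, h4, h5]
        linarith
    _ = (∫ y in (-l)..l, G (y + 2*Real.pi)) - ∫ y in (-l)..l, G y := by
        rw [integral_comp_add_right (a := -l) (b := l) (f := G) (2*Real.pi)]
        congr 2 <;> ring
    _ = ∫ y in (-l)..l, (G (y + 2*Real.pi) - G y) := by
        rw [← intervalIntegral.integral_sub (hc3.intervalIntegrable _ _) (hGi _ _)]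
    _ = ∫ y in (-l)..l, (∫ t in (0:ℝ)..(2*Real.pi), g t) := by
        congr 1; funext y; exact hD y
    _ = 2*l*∫ t in (0:ℝ)..(2*Real.pi), g t := by
        rw [intervalIntegral.integral_const, smul_eq_mul]; ring

lemma amgm {x α β : ℝ} (hx : 0 ≤ x) (hα : 0 < α) (hβ : 0 ≤ β)
    (h : ∀ c, 0 < c → x ≤ α*c + β/c) : x^2 ≤ 4*(α*β) := by
  rcases eq_or_lt_of_le hβ with hβ0 | hβpos
  · have hx0 : x = 0 := by
      by_contra hxp
      have hxpos : 0 < x := lt_of_le_of_ne hx (Ne.symm hxp)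
      have h2 := h (x/(2*α)) (by positivity)
      rw [← hβ0] at h2
      have h3 : α*(x/(2*α)) + 0/(x/(2*α)) = x/2 := by field_simp; ring
      rw [h3] at h2
      linarith
    rw [hx0]
    nlinarith
  · set c := Real.sqrt (β/α) with hc
    have hcpos : 0 < c := Real.sqrt_pos.2 (by positivity)
    have hc2 : c^2 = β/α := Real.sq_sqrt (by positivity)
    have hac : α * c^2 = β := by rw [hc2]; field_simp
    have hx2 : x^2 ≤ (α*c + β/c)^2 := by
      have := h c hcpos
      nlinarith [this, hx]
    have heq : (α*c + β/c)^2 = 4*(α*β) := by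
      field_simp
      nlinarith [hac]
    linarith [hx2, heq.le]

lemma ind_int_le {P c d : ℝ} (hP : 0 ≤ P) (hcd : c ≤ d) :
    ∫ y in (0:ℝ)..(2*Real.pi), indicator (Icc c d) (fun _ => P) y ≤ (d - c) * P := by
  have h0 : (0:ℝ) ≤ 2*Real.pi := by positivity
  rw [intervalIntegral.integral_of_le h0]
  have h1 : ∫ y in Ioc (0:ℝ) (2*Real.pi), indicator (Icc c d) (fun _ => P) y
      = ∫ y in Icc c d, P ∂(volume.restrict (Ioc (0:ℝ) (2*Real.pi))) := by
    exact MeasureTheory.integral_indicator measurableSet_Icc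
  rw [h1, MeasureTheory.setIntegral_const, smul_eq_mul]
  have h2 : (volume.restrict (Ioc (0:ℝ) (2*Real.pi))) (Icc c d) ≤ ENNReal.ofReal (d - c) := by
    rw [Measure.restrict_apply measurableSet_Icc]
    calc volume (Icc c d ∩ Ioc (0:ℝ) (2*Real.pi)) ≤ volume (Icc c d) :=
          measure_mono inter_subset_left
      _ = ENNReal.ofReal (d - c) := Real.volume_Icc
  have h3 : ((volume.restrict (Ioc (0:ℝ) (2*Real.pi))) (Icc c d)).toReal ≤ d - c := by
    calc ((volume.restrict (Ioc (0:ℝ) (2*Real.pi))) (Icc c d)).toReal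
        ≤ (ENNReal.ofReal (d - c)).toReal := ENNReal.toReal_mono ENNReal.ofReal_ne_top h2
      _ = d - c := ENNReal.toReal_ofReal (by linarith)
  exact mul_le_mul_of_nonneg_right h3 hP

/-- Spectral gap in the monotone region (core of Lemma A.1): for `b ∈ C¹(𝕋)` with
`|b'| ≥ m > 0` on an open set `U`, `f ∈ H¹₀(U)` (represented by a `C¹` periodic
function supported in `U`), and `L > 0` no larger than the minimal distance between
distinct zeros of `b - λ` in `closure U`, one has
`∫|f|² ≤ C (L² ∫|f'|² + (mL)⁻¹ ∫ |b-λ| |f|²)`, with `C` depending only on the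
number of zeros and the `C¹` norm of `b`. -/
theorem stmt13 (n : ℕ) (Kb : ℝ) (hKb : 0 < Kb) :
    ∃ C : ℝ, 0 < C ∧
    ∀ (b : ℝ → ℝ) (m lam L : ℝ) (U : Set ℝ) (Z : Finset ℝ) (f : ℝ → ℂ),
    0 < m →
    ContDiff ℝ 1 b → Function.Periodic b (2 * Real.pi) →
    (∀ y, |b y| ≤ Kb ∧ |deriv b y| ≤ Kb) →
    IsOpen U →
    (∀ y ∈ U, m ≤ |deriv b y|) →
    ContDiff ℝ 1 f → Function.Periodic f (2 * Real.pi) →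
    tsupport f ⊆ U →
    Z.card ≤ n →
    (∀ y ∈ closure U ∩ Icc (0 : ℝ) (2 * Real.pi), b y = lam → y ∈ Z) →
    0 < L →
    (∀ y₁ ∈ Z, ∀ y₂ ∈ Z, y₁ ≠ y₂ → L ≤ |y₁ - y₂|) →
    (∫ y in (0 : ℝ)..(2 * Real.pi), ‖f y‖ ^ 2)
      ≤ C * (L ^ 2 * (∫ y in (0 : ℝ)..(2 * Real.pi), ‖deriv f y‖ ^ 2)
            + (1 / (m * L)) * ∫ y in (0 : ℝ)..(2 * Real.pi), |b y - lam| * ‖f y‖ ^ 2) := by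
  set K : ℝ := 2*(n:ℝ) + 4 with hK
  have hKpos : 0 < K := by positivity
  refine ⟨8 + 4*K^2, by positivity, ?_⟩
  intro b m lam L U Z f hm hb hbper hKbB hUopen hbU hf hfper hsupp hcard hZ hL hspace
  have hπ : 0 < Real.pi := Real.pi_pos
  set l : ℝ := min L Real.pi with hldef
  have hl0 : 0 < l := lt_min hL hπ
  have hlL : l ≤ L := min_le_left _ _
  have hlπ : l ≤ Real.pi := min_le_right _ _
  have hmL : 0 < m * L := mul_pos hm hL
  set A : ℝ := ∫ y in (0:ℝ)..(2*Real.pi), ‖f y‖ ^ 2 with hA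
  set D : ℝ := ∫ y in (0:ℝ)..(2*Real.pi), ‖deriv f y‖ ^ 2 with hD
  set II : ℝ := ∫ y in (0:ℝ)..(2*Real.pi), |b y - lam| * ‖f y‖ ^ 2 with hII
  set ε : ℝ := 1/(2*K*l) with hε
  have hεpos : 0 < ε := by positivity
  -- continuity facts
  have hfc : Continuous f := hf.continuous
  have hfd : Differentiable ℝ f := hf.differentiable one_ne_zero
  have hdc : Continuous (deriv f) := hf.continuous_deriv le_rfl
  have hdper : Function.Periodic (deriv f) (2*Real.pi) := periodic_deriv' hfper
  have hgc : Continuous (fun t => ‖deriv f t‖^2) := (hdc.norm).pow 2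
  have hgper : Function.Periodic (fun t => ‖deriv f t‖^2) (2*Real.pi) := by
    intro t; simp [hdper t]
  have hφc : Continuous (fun t => ‖f t‖^2) := (hfc.norm).pow 2
  have hφper : Function.Periodic (fun t => ‖f t‖^2) (2*Real.pi) := by
    intro t; simp [hfper t]
  have hbc : Continuous b := hb.continuous
  have h2π0 : (0:ℝ) ≤ 2*Real.pi := by positivity
  have hA0 : 0 ≤ A := integral_nonneg h2π0 (fun t _ => by positivity)
  have hD0 : 0 ≤ D := integral_nonneg h2π0 (fun t _ => by positivity)
  have hII0 : 0 ≤ II := integral_nonneg h2π0 (fun t _ => by positivity)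
  set P : ℝ := ε*A + ε⁻¹*D with hPdef
  have hP0 : 0 ≤ P := add_nonneg (mul_nonneg hεpos.le hA0) (mul_nonneg (by positivity) hD0)
  -- existence of a zero of f
  have hzero : ∃ v, f v = 0 := by
    by_contra hcon
    push_neg at hcon
    have hall : ∀ x : ℝ, x ∈ U := by
      intro x
      exact hsupp (subset_tsupport f (by simp [Function.mem_support, hcon x]))
    have hder : ∀ x, m ≤ |deriv b x| := fun x => hbU x (hall x)
    have hcd : Continuous (deriv b) := hb.continuous_deriv le_rfl
    have hne : ∀ x, deriv b x ≠ 0 := by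
      intro x h
      have := hder x; rw [h] at this; simp at this; linarith
    rcases lt_trichotomy (deriv b 0) 0 with hneg | h0 | hpos
    · have hallneg : ∀ x, deriv b x < 0 := by
        intro x
        rcases lt_or_ge (deriv b x) 0 with h | h
        · exact h
        · exfalso
          have hx : deriv b x ≠ 0 := hne x
          have hgt : 0 < deriv b x := lt_of_le_of_ne h (Ne.symm hx)
          have : (0:ℝ) ∈ uIcc (deriv b 0) (deriv b x) :=
            mem_uIcc.2 (Or.inl ⟨hneg.le, hgt.le⟩)
          obtain ⟨z, _, hz0⟩ := intermediate_value_uIcc (hcd.continuousOn (s := uIcc 0 x)) this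
          exact hne z hz0
      have hanti : StrictAnti b := strictAnti_of_deriv_neg hallneg
      have := hanti (by positivity : (0:ℝ) < 2*Real.pi)
      have hper := hbper 0
      simp at hper
      linarith
    · exact hne 0 h0
    · have hallpos : ∀ x, 0 < deriv b x := by
        intro x
        rcases lt_or_ge 0 (deriv b x) with h | h
        · exact h
        · exfalso
          have hx : deriv b x ≠ 0 := hne x
          have hlt : deriv b x < 0 := lt_of_le_of_ne h hx
          have : (0:ℝ) ∈ uIcc (deriv b x) (deriv b 0) :=
            mem_uIcc.2 (Or.inl ⟨hlt.le, hpos.le⟩)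
          obtain ⟨z, _, hz0⟩ := intermediate_value_uIcc (hcd.continuousOn (s := uIcc x 0)) this
          exact hne z hz0
      have hmono : StrictMono b := strictMono_of_deriv_pos hallpos
      have := hmono (by positivity : (0:ℝ) < 2*Real.pi)
      have hper := hbper 0
      simp at hper
      linarith
  obtain ⟨v, hv⟩ := hzero
  -- a zero of f within distance π of any point
  have nearzero : ∀ y : ℝ, ∃ y₀, f y₀ = 0 ∧ |y - y₀| ≤ Real.pi := by
    intro y
    set k : ℤ := round ((y - v)/(2*Real.pi)) with hk
    refine ⟨v + k * (2*Real.pi), by rw [(hfper.int_mul k) v]; exact hv, ?_⟩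
    have h1 : |((y - v)/(2*Real.pi)) - k| ≤ 1/2 := abs_sub_round _
    have h2 : y - (v + k*(2*Real.pi)) = (2*Real.pi) * (((y - v)/(2*Real.pi)) - k) := by
      field_simp
      ring
    rw [h2, abs_mul, abs_of_pos (by positivity : (0:ℝ) < 2*Real.pi)]
    calc 2*Real.pi * |((y - v)/(2*Real.pi)) - k| ≤ 2*Real.pi * (1/2) :=
          mul_le_mul_of_nonneg_left h1 (by positivity)
      _ = Real.pi := by ring
  -- derivative of ‖f‖²
  have hφ' : ∀ t : ℝ, HasDerivAt (fun s => ‖f s‖^2) (2 * (inner ℝ (f t) (deriv f t) : ℝ)) t :=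
    fun t => ((hfd t).hasDerivAt).norm_sq
  have hφ'c : Continuous (fun t => 2 * (inner ℝ (f t) (deriv f t) : ℝ)) :=
    continuous_const.mul (hfc.inner hdc)
  have hφ'bd : ∀ t : ℝ, |2 * (inner ℝ (f t) (deriv f t) : ℝ)| ≤ ε*‖f t‖^2 + ε⁻¹*‖deriv f t‖^2 := by
    intro t
    have h1 : |2 * (inner ℝ (f t) (deriv f t) : ℝ)| ≤ 2 * (‖f t‖ * ‖deriv f t‖) := by
      rw [abs_mul, abs_two]
      exact mul_le_mul_of_nonneg_left (abs_real_inner_le_norm _ _) (by norm_num)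
    have h2 : 2 * (‖f t‖ * ‖deriv f t‖) ≤ ε*‖f t‖^2 + ε⁻¹*‖deriv f t‖^2 := by
      rw [inv_eq_one_div, ← sub_nonneg]
      have h3 : ε*‖f t‖^2 + (1/ε)*‖deriv f t‖^2 - 2 * (‖f t‖ * ‖deriv f t‖)
          = (ε^2*‖f t‖^2 + ‖deriv f t‖^2 - 2*‖f t‖*‖deriv f t‖*ε)/ε := by
        field_simp
      rw [h3]
      apply div_nonneg ?_ hεpos.le
      nlinarith [sq_nonneg (ε*‖f t‖ - ‖deriv f t‖)]
    linarith
  have hψc : Continuous (fun t => ε*‖f t‖^2 + ε⁻¹*‖deriv f t‖^2) :=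
    (continuous_const.mul hφc).add (continuous_const.mul hgc)
  have hψper : Function.Periodic (fun t => ε*‖f t‖^2 + ε⁻¹*‖deriv f t‖^2) (2*Real.pi) := by
    intro t; simp [hfper t, hdper t]
  -- sup bound
  have supb : ∀ y : ℝ, ‖f y‖^2 ≤ P := by
    intro y
    obtain ⟨y₀, hy₀0, hy₀d⟩ := nearzero y
    have heq : (∫ t in y₀..y, 2 * (inner ℝ (f t) (deriv f t) : ℝ)) = ‖f y‖^2 - ‖f y₀‖^2 :=
      integral_eq_sub_of_hasDerivAt (fun t _ => hφ' t) (hφ'c.intervalIntegrable _ _)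
    have hy₀sq : ‖f y₀‖^2 = 0 := by rw [hy₀0]; simp
    have h1 : ‖f y‖^2 ≤ |∫ t in y₀..y, 2 * (inner ℝ (f t) (deriv f t) : ℝ)| := by
      have h2 : ‖f y‖^2 = ∫ t in y₀..y, 2 * (inner ℝ (f t) (deriv f t) : ℝ) := by
        rw [heq, hy₀sq, sub_zero]
      calc ‖f y‖^2 = ∫ t in y₀..y, 2 * (inner ℝ (f t) (deriv f t) : ℝ) := h2
        _ ≤ |∫ t in y₀..y, 2 * (inner ℝ (f t) (deriv f t) : ℝ)| := le_abs_self _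
    have habs : |∫ t in y₀..y, 2 * (inner ℝ (f t) (deriv f t) : ℝ)|
        ≤ ∫ t in (y - Real.pi)..(y + Real.pi), (ε*‖f t‖^2 + ε⁻¹*‖deriv f t‖^2) := by
      have hsub : ∀ a' b' : ℝ, y - Real.pi ≤ a' → a' ≤ b' → b' ≤ y + Real.pi →
          (∫ t in a'..b', |2 * (inner ℝ (f t) (deriv f t) : ℝ)|)
            ≤ ∫ t in (y - Real.pi)..(y + Real.pi), (ε*‖f t‖^2 + ε⁻¹*‖deriv f t‖^2) := by
        intro a' b' ha hab hbb
        calc (∫ t in a'..b', |2 * (inner ℝ (f t) (deriv f t) : ℝ)|)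
            ≤ ∫ t in a'..b', (ε*‖f t‖^2 + ε⁻¹*‖deriv f t‖^2) := by
              apply integral_mono_on hab (hφ'c.abs.intervalIntegrable _ _)
                (hψc.intervalIntegrable _ _)
              exact fun x _ => hφ'bd x
          _ ≤ ∫ t in (y - Real.pi)..(y + Real.pi), (ε*‖f t‖^2 + ε⁻¹*‖deriv f t‖^2) := by
              apply integral_mono_interval ha hab hbb
                (Filter.Eventually.of_forall (fun t => by positivity))
                (hψc.intervalIntegrable _ _)
      have hy₀l : y - Real.pi ≤ y₀ := by
        have := abs_le.1 hy₀d; linarith [this.2]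
      have hy₀r : y₀ ≤ y + Real.pi := by
        have := abs_le.1 hy₀d; linarith [this.1]
      have hnorm : |∫ t in y₀..y, 2 * (inner ℝ (f t) (deriv f t) : ℝ)|
          ≤ abs (∫ t in y₀..y, |2 * (inner ℝ (f t) (deriv f t) : ℝ)|) := by
        have := intervalIntegral.norm_integral_le_abs_integral_norm
          (f := fun t => 2 * (inner ℝ (f t) (deriv f t) : ℝ)) (a := y₀) (b := y) (μ := volume)
        simp only [Real.norm_eq_abs] at this
        exact this
      rcases le_total y₀ y with h | h
      · have hnn : 0 ≤ ∫ t in y₀..y, |2 * (inner ℝ (f t) (deriv f t) : ℝ)| :=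
          integral_nonneg h (fun t _ => abs_nonneg _)
        calc |∫ t in y₀..y, 2 * (inner ℝ (f t) (deriv f t) : ℝ)|
            ≤ ∫ t in y₀..y, |2 * (inner ℝ (f t) (deriv f t) : ℝ)| := by
              rw [abs_of_nonneg hnn] at hnorm; exact hnorm
          _ ≤ _ := hsub y₀ y hy₀l h (by linarith)
      · have hflip : (∫ t in y₀..y, |2 * (inner ℝ (f t) (deriv f t) : ℝ)|)
            = -∫ t in y..y₀, |2 * (inner ℝ (f t) (deriv f t) : ℝ)| :=
          intervalIntegral.integral_symm _ _
        have hnn : 0 ≤ ∫ t in y..y₀, |2 * (inner ℝ (f t) (deriv f t) : ℝ)| :=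
          integral_nonneg h (fun t _ => abs_nonneg _)
        calc |∫ t in y₀..y, 2 * (inner ℝ (f t) (deriv f t) : ℝ)|
            ≤ ∫ t in y..y₀, |2 * (inner ℝ (f t) (deriv f t) : ℝ)| := by
              rw [hflip, abs_neg, abs_of_nonneg hnn] at hnorm; exact hnorm
          _ ≤ _ := hsub y y₀ (by linarith) h hy₀r
    have hperint : (∫ t in (y - Real.pi)..(y + Real.pi), (ε*‖f t‖^2 + ε⁻¹*‖deriv f t‖^2))
        = ∫ t in (0:ℝ)..(2*Real.pi), (ε*‖f t‖^2 + ε⁻¹*‖deriv f t‖^2) := by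
      have := hψper.intervalIntegral_add_eq (y - Real.pi) 0
      have he : y - Real.pi + 2*Real.pi = y + Real.pi := by ring
      rw [he] at this
      rw [this]
      norm_num
    have hsplit : (∫ t in (0:ℝ)..(2*Real.pi), (ε*‖f t‖^2 + ε⁻¹*‖deriv f t‖^2)) = P := by
      rw [integral_add (f := fun t => ε*‖f t‖^2) (g := fun t => ε⁻¹*‖deriv f t‖^2)
        ((continuous_const.mul hφc).intervalIntegrable _ _)
        ((continuous_const.mul hgc).intervalIntegrable _ _),
        intervalIntegral.integral_const_mul, intervalIntegral.integral_const_mul]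
    exact h1.trans (habs.trans (le_of_eq (hperint.trans hsplit)))
  -- local bound near a zero of f
  have locb : ∀ y w : ℝ, |w - y| ≤ l → f w = 0 →
      ‖f y‖^2 ≤ 2*l*(∫ t in (y-l)..(y+l), ‖deriv f t‖^2) := by
    intro y w hwl hw0
    set Dl : ℝ := ∫ t in (y-l)..(y+l), ‖deriv f t‖^2 with hDl
    have hDl0 : 0 ≤ Dl := integral_nonneg (by linarith) (fun t _ => by positivity)
    have hwy := abs_le.1 hwl
    have key : ∀ c, 0 < c → ‖f y‖ ≤ l*c + (Dl/2)/c := by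
      intro c hc
      have heq : (∫ t in w..y, deriv f t) = f y - f w :=
        integral_deriv_eq_sub (fun x _ => hfd x)
          (hdc.intervalIntegrable _ _)
      have h1 : ‖f y‖ ≤ |∫ t in w..y, ‖deriv f t‖| := by
        calc ‖f y‖ = ‖f y - f w‖ := by rw [hw0, sub_zero]
          _ = ‖∫ t in w..y, deriv f t‖ := by rw [heq]
          _ ≤ |∫ t in w..y, ‖deriv f t‖| := intervalIntegral.norm_integral_le_abs_integral_norm
      have hptw : ∀ t : ℝ, ‖deriv f t‖ ≤ c/2 + ‖deriv f t‖^2/(2*c) := by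
        intro t
        rw [div_add_div _ _ (by norm_num : (2:ℝ) ≠ 0) (by positivity : 2*c ≠ 0)]
        rw [le_div_iff₀ (by positivity)]
        nlinarith [sq_nonneg (c - ‖deriv f t‖), norm_nonneg (deriv f t)]
      have hsub : ∀ a' b' : ℝ, y - l ≤ a' → a' ≤ b' → b' ≤ y + l →
          (∫ t in a'..b', ‖deriv f t‖) ≤ l*c + (Dl/2)/c := by
        intro a' b' ha hab hbb
        have hcont2 : Continuous (fun t => c/2 + ‖deriv f t‖^2/(2*c)) :=
          continuous_const.add (hgc.div_const _)
        calc (∫ t in a'..b', ‖deriv f t‖)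
            ≤ ∫ t in a'..b', (c/2 + ‖deriv f t‖^2/(2*c)) := by
              apply integral_mono_on hab (hdc.norm.intervalIntegrable _ _)
                (hcont2.intervalIntegrable _ _)
              exact fun x _ => hptw x
          _ ≤ ∫ t in (y-l)..(y+l), (c/2 + ‖deriv f t‖^2/(2*c)) := by
              apply integral_mono_interval ha hab hbb
                (Filter.Eventually.of_forall (fun t => by positivity))
                (hcont2.intervalIntegrable _ _)
          _ = (y+l - (y-l)) * (c/2) + (1/(2*c)) * Dl := by
              rw [integral_add (intervalIntegrable_const) ?_]
              · rw [intervalIntegral.integral_const, smul_eq_mul]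
                congr 1
                have : (fun t => ‖deriv f t‖^2/(2*c)) = fun t => (1/(2*c)) * ‖deriv f t‖^2 := by
                  funext t; ring
                rw [this, intervalIntegral.integral_const_mul]
              · exact (hgc.div_const _).intervalIntegrable _ _
          _ = l*c + (Dl/2)/c := by field_simp; ring
      rcases le_total w y with h | h
      · have hnn : 0 ≤ ∫ t in w..y, ‖deriv f t‖ := integral_nonneg h (fun t _ => norm_nonneg _)
        rw [abs_of_nonneg hnn] at h1
        exact h1.trans (hsub w y (by linarith) h (by linarith))
      · have hflip : (∫ t in w..y, ‖deriv f t‖) = -∫ t in y..w, ‖deriv f t‖ :=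
          intervalIntegral.integral_symm _ _
        have hnn : 0 ≤ ∫ t in y..w, ‖deriv f t‖ := integral_nonneg h (fun t _ => norm_nonneg _)
        rw [hflip, abs_neg, abs_of_nonneg hnn] at h1
        exact h1.trans (hsub y w (by linarith) h (by linarith))
    have := amgm (norm_nonneg (f y)) hl0 (by linarith : (0:ℝ) ≤ Dl/2) key
    calc ‖f y‖^2 ≤ 4*(l*(Dl/2)) := this
      _ = 2*l*Dl := by ring
  -- the bad set
  set S₂ : Set ℝ := (Icc 0 l ∪ Icc (2*Real.pi - l) (2*Real.pi)) ∪ ⋃ z ∈ Z, Icc (z-l) (z+l)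
    with hS₂
  have hS₂m : MeasurableSet S₂ :=
    ((measurableSet_Icc.union measurableSet_Icc).union
      (Finset.measurableSet_biUnion Z (fun z _ => measurableSet_Icc)))
  -- pointwise bound
  have hpt : ∀ y ∈ Icc (0:ℝ) (2*Real.pi), ‖f y‖^2 ≤
      (1/(m*L))*(|b y - lam| * ‖f y‖^2)
      + 2*l*(∫ t in (y-l)..(y+l), ‖deriv f t‖^2)
      + indicator S₂ (fun _ => P) y := by
    intro y hy
    have hT1nn : 0 ≤ (1/(m*L))*(|b y - lam| * ‖f y‖^2) := by
      apply mul_nonneg (by positivity)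
      positivity
    have hT2nn : 0 ≤ 2*l*(∫ t in (y-l)..(y+l), ‖deriv f t‖^2) := by
      apply mul_nonneg (by positivity)
      exact integral_nonneg (by linarith) (fun t _ => by positivity)
    have hT3nn : 0 ≤ indicator S₂ (fun _ => P) y := indicator_nonneg (fun _ _ => hP0) y
    by_cases hfy : f y = 0
    · have hz : ‖f y‖^2 = 0 := by rw [hfy]; simp
      linarith [hT1nn, hT2nn, hT3nn, hz]
    by_cases hbig : m*L ≤ |b y - lam|
    · have h1 : (1:ℝ) ≤ (1/(m*L))*|b y - lam| := by
        rw [one_div, ← div_eq_inv_mul, le_div_iff₀ hmL]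
        linarith
      have : ‖f y‖^2 ≤ (1/(m*L))*(|b y - lam| * ‖f y‖^2) := by
        calc ‖f y‖^2 = 1 * ‖f y‖^2 := by ring
          _ ≤ ((1/(m*L))*|b y - lam|) * ‖f y‖^2 :=
              mul_le_mul_of_nonneg_right h1 (by positivity)
          _ = (1/(m*L))*(|b y - lam| * ‖f y‖^2) := by ring
      linarith
    push_neg at hbig
    -- dichotomy step
    set ρ : ℝ := min (|b y - lam|/m) Real.pi with hρdef
    have hρ0 : 0 ≤ ρ := le_min (by positivity) hπ.le
    have hρl : ρ ≤ l := by
      apply le_min ?_ (min_le_right _ _)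
      calc ρ ≤ |b y - lam|/m := min_le_left _ _
        _ ≤ L := by rw [div_le_iff₀ hm]; nlinarith
    have exw : ∃ w ∈ Icc (y-ρ) (y+ρ), f w = 0 ∨ (b w = lam ∧ w ∈ U) := by
      by_contra hcon
      push_neg at hcon
      have hfne : ∀ w ∈ Icc (y-ρ) (y+ρ), f w ≠ 0 ∧ b w ≠ lam := by
        intro w hw
        have h1 := hcon w hw
        refine ⟨h1.1, fun hbw => ?_⟩
        have hwU : w ∈ U := hsupp (subset_tsupport f
          (by simp [Function.mem_support, h1.1]))
        exact (h1.2 hbw) hwU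
      rcases le_total (|b y - lam|/m) Real.pi with hcase | hcase
      · have hρeq : ρ = |b y - lam|/m := min_eq_left hcase
        have hρb : |b y - lam| ≤ m * ρ := by
          rw [hρeq, mul_div_cancel₀ _ hm.ne']
        apply dichotomy b hb hm hρ0 hρb
        · intro w hw
          apply hbU w
          exact hsupp (subset_tsupport f
            (by simp [Function.mem_support, (hfne w hw).1]))
        · exact fun w hw => (hfne w hw).2
      · have hρeq : ρ = Real.pi := min_eq_right hcase
        obtain ⟨y₀, hy₀0, hy₀d⟩ := nearzero y
        have hy₀mem : y₀ ∈ Icc (y-ρ) (y+ρ) := by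
          have := abs_le.1 hy₀d
          rw [hρeq]
          constructor <;> linarith [this.1, this.2]
        exact (hfne y₀ hy₀mem).1 hy₀0
    obtain ⟨w, hwI, hw⟩ := exw
    have hwyl : |w - y| ≤ l := by
      have h1 := hwI.1; have h2 := hwI.2
      rw [abs_le]; constructor <;> linarith
    rcases hw with hw0 | ⟨hblam, hwU⟩
    · have h2 := locb y w hwyl hw0
      refine h2.trans (le_trans (le_add_of_nonneg_left hT1nn) (le_add_of_nonneg_right hT3nn))
    · -- b w = lam, w ∈ U : y is in the bad set S₂
      have hyS : y ∈ S₂ := by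
        rcases le_or_gt 0 w with hw0 | hw0
        · rcases le_or_gt w (2*Real.pi) with hw2 | hw2
          · have hwZ : w ∈ Z := hZ w ⟨subset_closure hwU, ⟨hw0, hw2⟩⟩ hblam
            apply Or.inr
            apply mem_biUnion hwZ
            have := abs_le.1 hwyl
            exact ⟨by linarith [this.2], by linarith [this.1]⟩
          · apply Or.inl; apply Or.inr
            have := abs_le.1 hwyl
            exact ⟨by linarith [this.1], hy.2⟩
        · apply Or.inl; apply Or.inl
          have := abs_le.1 hwyl
          exact ⟨hy.1, by linarith [this.2]⟩
      rw [indicator_of_mem hyS]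
      exact (supb y).trans (le_add_of_nonneg_left (add_nonneg hT1nn hT2nn))
  -- integrate the pointwise bound
  set Gg : ℝ → ℝ := fun x => ∫ t in (0:ℝ)..x, ‖deriv f t‖^2 with hGg
  have hGgc : Continuous Gg :=
    intervalIntegral.continuous_primitive (fun a b => hgc.intervalIntegrable a b) 0
  have hT2eq : (fun y => 2*l*(∫ t in (y-l)..(y+l), ‖deriv f t‖^2))
      = fun y => 2*l*(Gg (y+l) - Gg (y-l)) := by
    funext y
    congr 1
    exact (integral_interval_sub_left (hgc.intervalIntegrable 0 (y+l))
      (hgc.intervalIntegrable 0 (y-l))).symm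
  have hT2c : Continuous (fun y => 2*l*(∫ t in (y-l)..(y+l), ‖deriv f t‖^2)) := by
    rw [hT2eq]
    exact continuous_const.mul ((hGgc.comp (by continuity)).sub (hGgc.comp (by continuity)))
  have hT1c : Continuous (fun y => (1/(m*L))*(|b y - lam| * ‖f y‖^2)) :=
    continuous_const.mul (((hbc.sub continuous_const).abs).mul hφc)
  have hindint : ∀ (s : Set ℝ), MeasurableSet s →
      IntervalIntegrable (indicator s (fun _ => P)) volume 0 (2*Real.pi) := by
    intro s hs
    rw [intervalIntegrable_iff]
    apply (MeasureTheory.integrable_indicator_iff hs).2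
    refine MeasureTheory.integrableOn_const (ne_of_lt ?_)
    rw [Measure.restrict_apply hs]
    calc volume (s ∩ uIoc (0:ℝ) (2*Real.pi)) ≤ volume (uIoc (0:ℝ) (2*Real.pi)) :=
          measure_mono inter_subset_right
      _ < ⊤ := measure_Ioc_lt_top
  have hmono := intervalIntegral.integral_mono_on h2π0
    (hφc.intervalIntegrable 0 (2*Real.pi))
    (((hT1c.add hT2c).intervalIntegrable 0 (2*Real.pi)).add (hindint S₂ hS₂m))
    (fun y hy => by
      have := hpt y hy
      simpa [add_assoc] using this)
  -- compute/bound the RHS integral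
  have hsplit1 : (∫ y in (0:ℝ)..(2*Real.pi),
      (((1/(m*L))*(|b y - lam| * ‖f y‖^2) + 2*l*(∫ t in (y-l)..(y+l), ‖deriv f t‖^2))
        + indicator S₂ (fun _ => P) y))
      = (∫ y in (0:ℝ)..(2*Real.pi), (1/(m*L))*(|b y - lam| * ‖f y‖^2))
        + (∫ y in (0:ℝ)..(2*Real.pi), 2*l*(∫ t in (y-l)..(y+l), ‖deriv f t‖^2))
        + (∫ y in (0:ℝ)..(2*Real.pi), indicator S₂ (fun _ => P) y) := by
    rw [integral_add (f := fun y => (1/(m*L))*(|b y - lam| * ‖f y‖^2)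
        + 2*l*(∫ t in (y-l)..(y+l), ‖deriv f t‖^2))
        ((hT1c.add hT2c).intervalIntegrable 0 (2*Real.pi)) (hindint S₂ hS₂m),
      integral_add (hT1c.intervalIntegrable 0 (2*Real.pi)) (hT2c.intervalIntegrable 0 (2*Real.pi))]
  have hI1 : (∫ y in (0:ℝ)..(2*Real.pi), (1/(m*L))*(|b y - lam| * ‖f y‖^2)) = (1/(m*L)) * II :=
    integral_const_mul _ _
  have hI2 : (∫ y in (0:ℝ)..(2*Real.pi), 2*l*(∫ t in (y-l)..(y+l), ‖deriv f t‖^2))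
      = 2*l*(2*l*D) := by
    rw [intervalIntegral.integral_const_mul]
    congr 1
    exact conv_id _ hgc hgper hl0.le
  have hI3 : (∫ y in (0:ℝ)..(2*Real.pi), indicator S₂ (fun _ => P) y) ≤ K * l * P := by
    have hptind : ∀ y : ℝ, indicator S₂ (fun _ => P) y ≤
        indicator (Icc 0 l) (fun _ => P) y
        + indicator (Icc (2*Real.pi - l) (2*Real.pi)) (fun _ => P) y
        + ∑ z ∈ Z, indicator (Icc (z-l) (z+l)) (fun _ => P) y := by
      intro y
      have hnn1 : 0 ≤ indicator (Icc 0 l) (fun _ => P) y := indicator_nonneg (fun _ _ => hP0) y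
      have hnn2 : 0 ≤ indicator (Icc (2*Real.pi - l) (2*Real.pi)) (fun _ => P) y :=
        indicator_nonneg (fun _ _ => hP0) y
      have hnn3 : ∀ z ∈ Z, 0 ≤ indicator (Icc (z-l) (z+l)) (fun _ => P) y :=
        fun z _ => indicator_nonneg (fun _ _ => hP0) y
      have hnnsum : 0 ≤ ∑ z ∈ Z, indicator (Icc (z-l) (z+l)) (fun _ => P) y :=
        Finset.sum_nonneg hnn3
      by_cases hy : y ∈ S₂
      · rw [indicator_of_mem hy]
        rcases hy with (hy1 | hy2) | hy3
        · rw [indicator_of_mem hy1]; linarith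
        · rw [indicator_of_mem hy2]; linarith
        · simp only [mem_iUnion, exists_prop] at hy3
          obtain ⟨z, hzZ, hzmem⟩ := hy3
          have : P ≤ ∑ z ∈ Z, indicator (Icc (z-l) (z+l)) (fun _ => P) y := by
            have hle : indicator (Icc (z-l) (z+l)) (fun _ => P) y = P := indicator_of_mem hzmem _
            calc P = indicator (Icc (z-l) (z+l)) (fun _ => P) y := hle.symm
              _ ≤ _ := Finset.single_le_sum hnn3 hzZ
          linarith
      · rw [indicator_of_notMem hy]
        linarith
    have hint2 : ∀ z : ℝ, IntervalIntegrable (indicator (Icc (z-l) (z+l)) (fun _ => P))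
        volume 0 (2*Real.pi) := fun z => hindint _ measurableSet_Icc
    have hsumInt : IntervalIntegrable
        (fun y => ∑ z ∈ Z, indicator (Icc (z-l) (z+l)) (fun _ => P) y) volume 0 (2*Real.pi) := by
      have h0 := IntervalIntegrable.sum (μ := volume) (a := 0) (b := 2*Real.pi) Z
        (f := fun z => indicator (Icc (z-l) (z+l)) (fun _ => P)) (fun z _ => hint2 z)
      have heqf : (∑ z ∈ Z, indicator (Icc (z-l) (z+l)) (fun _ => P))
          = fun y => ∑ z ∈ Z, indicator (Icc (z-l) (z+l)) (fun _ => P) y := by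
        funext y; simp [Finset.sum_apply]
      rwa [heqf] at h0
    calc (∫ y in (0:ℝ)..(2*Real.pi), indicator S₂ (fun _ => P) y)
        ≤ ∫ y in (0:ℝ)..(2*Real.pi),
            (indicator (Icc 0 l) (fun _ => P) y
            + indicator (Icc (2*Real.pi - l) (2*Real.pi)) (fun _ => P) y
            + ∑ z ∈ Z, indicator (Icc (z-l) (z+l)) (fun _ => P) y) := by
          apply integral_mono_on h2π0 (hindint S₂ hS₂m)
            (((hindint _ measurableSet_Icc).add (hindint _ measurableSet_Icc)).add hsumInt)
          exact fun y _ => hptind y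
      _ = (∫ y in (0:ℝ)..(2*Real.pi), indicator (Icc 0 l) (fun _ => P) y)
          + (∫ y in (0:ℝ)..(2*Real.pi),
              indicator (Icc (2*Real.pi - l) (2*Real.pi)) (fun _ => P) y)
          + ∑ z ∈ Z, ∫ y in (0:ℝ)..(2*Real.pi), indicator (Icc (z-l) (z+l)) (fun _ => P) y := by
          rw [integral_add ((hindint _ measurableSet_Icc).add (hindint _ measurableSet_Icc))
            hsumInt,
            integral_add (hindint _ measurableSet_Icc) (hindint _ measurableSet_Icc),
            intervalIntegral.integral_finset_sum (fun z _ => hint2 z)]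
      _ ≤ (l - 0) * P + (2*Real.pi - (2*Real.pi - l)) * P + ∑ z ∈ Z, (2*l) * P := by
          apply add_le_add
          apply add_le_add
          · exact ind_int_le hP0 (by linarith)
          · exact ind_int_le hP0 (by linarith)
          · apply Finset.sum_le_sum
            intro z _
            have := ind_int_le hP0 (by linarith : z - l ≤ z + l)
            calc (∫ y in (0:ℝ)..(2*Real.pi), indicator (Icc (z-l) (z+l)) (fun _ => P) y)
                ≤ (z + l - (z - l)) * P := this
              _ = (2*l) * P := by ring
      _ ≤ l * P + l * P + (n:ℝ) * ((2*l) * P) := by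
          have hsum : ∑ z ∈ Z, (2*l) * P ≤ (n:ℝ) * ((2*l) * P) := by
            rw [Finset.sum_const]
            have : (Z.card : ℝ) ≤ (n : ℝ) := by exact_mod_cast hcard
            calc (Z.card : ℕ) • ((2*l)*P) = (Z.card : ℝ) * ((2*l)*P) := by
                  rw [nsmul_eq_mul]
              _ ≤ (n:ℝ) * ((2*l)*P) := by
                  apply mul_le_mul_of_nonneg_right this (by positivity)
          have h1 : (l - 0) * P = l * P := by ring
          have h2 : (2*Real.pi - (2*Real.pi - l)) * P = l * P := by ring
          rw [h1, h2]
          linarith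
      _ ≤ K * l * P := by
          rw [hK]
          nlinarith [mul_nonneg hl0.le hP0]
  -- final algebra
  have hfinal : A ≤ (1/(m*L)) * II + 2*l*(2*l*D) + K * l * P := by
    calc A ≤ _ := hmono
      _ = (1/(m*L)) * II + 2*l*(2*l*D)
          + (∫ y in (0:ℝ)..(2*Real.pi), indicator S₂ (fun _ => P) y) := by
          simp only [Pi.add_apply]
          rw [hsplit1, hI1, hI2]
      _ ≤ (1/(m*L)) * II + 2*l*(2*l*D) + K * l * P := add_le_add_right hI3 _
  have hKlP : K * l * P = A/2 + 2*K^2*l^2*D := by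
    rw [hPdef, hε]
    field_simp
  have hfin2 : A ≤ 2*((1/(m*L))*II) + (8 + 4*K^2)*(l^2*D) := by
    rw [hKlP] at hfinal
    nlinarith [hfinal]
  have hl2 : l^2 ≤ L^2 := pow_le_pow_left₀ hl0.le hlL 2
  have hIInn : 0 ≤ (1/(m*L))*II := mul_nonneg (by positivity) hII0
  have hC1 : (8 + 4*K^2)*(l^2*D) ≤ (8 + 4*K^2)*(L^2*D) :=
    mul_le_mul_of_nonneg_left (mul_le_mul_of_nonneg_right hl2 hD0) (by positivity)
  have hC2 : 2*((1/(m*L))*II) ≤ (8 + 4*K^2)*((1/(m*L))*II) := by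
    apply mul_le_mul_of_nonneg_right ?_ hIInn
    nlinarith [sq_nonneg K]
  calc A ≤ 2*((1/(m*L))*II) + (8 + 4*K^2)*(l^2*D) := hfin2
    _ ≤ (8 + 4*K^2)*((1/(m*L))*II) + (8 + 4*K^2)*(L^2*D) := add_le_add hC2 hC1
    _ = (8 + 4*K^2) * (L^2*D + (1/(m*L))*II) := by ring
end

section
/- Let $b : \mathbb{T} \to \mathbb{R}$ be smooth with $b(0) = 0$, $b'(0) = \cdots = b^{(N)}(0) = 0$, $b^{(N+1)}(0) > 0$, $N$ odd, and $b > 0$ on $(0, \sigma] \cup [-\sigma, 0)$ for some $\sigma > 0$ with $b' > 0$ on $(0,\sigma]$. Then there exists $c > 0$ such that for all $\lambda \in (0, b(\sigma)]$, letting $y_c \in (0, \sigma]$ be the unique point with $b(y_c) = \lambda$, and for all $0 \leq z \leq y \leq \sigma$: $\int_z^y |b(x) - \lambda|^{1/2} \, dx \geq c \, |y - z| \left( |b(y) - \lambda|^{1/2} + |b(z) - \lambda|^{1/2} \right)$. -/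
open MeasureTheory Set

theorem iterWithin_eq (g : ℝ → ℝ) (hg : ContDiff ℝ (⊤:ℕ∞) g) {s : Set ℝ} (hs : UniqueDiffOn ℝ s)
    {x : ℝ} (hx : x ∈ s) (k : ℕ) :
    iteratedDerivWithin k g s x = iteratedDeriv k g x := by
  rw [iteratedDerivWithin_eq_iteratedFDerivWithin, iteratedDeriv_eq_iteratedFDeriv]
  congr 1
  have h : HasFTaylorSeriesUpToOn (k : ℕ∞) g (ftaylorSeries ℝ g) s :=
    ((contDiff_iff_ftaylorSeries.mp (hg.of_le (by exact_mod_cast le_top))).hasFTaylorSeriesUpToOn s)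
  exact (h.eq_iteratedFDerivWithin_of_uniqueDiffOn le_rfl hs hx).symm

theorem tay (N : ℕ) (hN1 : 1 ≤ N) (b : ℝ → ℝ) (hb : ContDiff ℝ (⊤:ℕ∞) b)
    (hcrit : ∀ k, 1 ≤ k → k ≤ N → iteratedDeriv k b 0 = 0)
    {t : ℝ} (ht : 0 < t) :
    ∃ ξ ∈ Ioo 0 t, deriv b t = iteratedDeriv (N+1) b ξ * t ^ N / N.factorial := by
  obtain ⟨M, rfl⟩ : ∃ M, N = M + 1 := ⟨N - 1, (Nat.succ_pred_eq_of_pos hN1).symm⟩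
  set g := deriv b with hg
  have hgc : ContDiff ℝ (⊤:ℕ∞) g := (contDiff_infty_iff_deriv.mp hb).2
  have hu : UniqueDiffOn ℝ (Icc (0:ℝ) t) := uniqueDiffOn_Icc ht
  have h1 : ContDiffOn ℝ M g (Icc 0 t) := (hgc.of_le (by exact_mod_cast le_top)).contDiffOn
  have h2 : DifferentiableOn ℝ (iteratedDerivWithin M g (Icc 0 t)) (Ioo 0 t) := by
    apply DifferentiableOn.congr
      (f := iteratedDeriv M g)
      ((hgc.differentiable_iteratedDeriv M (by exact_mod_cast (WithTop.coe_lt_top _))).differentiableOn)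
    intro x hx
    exact iterWithin_eq g hgc hu (Ioo_subset_Icc_self hx) M
  obtain ⟨ξ, hξ, heq⟩ := taylor_mean_remainder_lagrange (f := g) (x₀ := 0) (n := M) ht.ne
    (by rwa [uIcc_of_le ht.le]) (by rwa [uIcc_of_le ht.le, uIoo_of_le ht.le])
  rw [uIcc_of_le ht.le] at heq
  rw [uIoo_of_le ht.le] at hξ
  refine ⟨ξ, hξ, ?_⟩
  have hz : taylorWithinEval g M (Icc 0 t) 0 t = 0 := by
    rw [taylor_within_apply]
    apply Finset.sum_eq_zero
    intro k hk
    have hkM : k ≤ M := Nat.lt_succ_iff.mp (Finset.mem_range.mp hk)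
    have : iteratedDerivWithin k g (Icc 0 t) 0 = 0 := by
      rw [iterWithin_eq g hgc hu (left_mem_Icc.mpr ht.le) k]
      rw [hg, ← iteratedDeriv_succ']
      exact hcrit (k+1) (Nat.le_add_left 1 k) (by omega)
    simp [this]
  have hrem : iteratedDerivWithin (M+1) g (Icc 0 t) ξ = iteratedDeriv (M+1+1) b ξ := by
    rw [iterWithin_eq g hgc hu (Ioo_subset_Icc_self hξ) (M+1), hg, ← iteratedDeriv_succ']
  rw [hz, sub_zero, sub_zero, hrem] at heq
  simpa using heq

theorem derivBounds (N : ℕ) (hN1 : 1 ≤ N) (σ : ℝ) (hσ : 0 < σ) (b : ℝ → ℝ)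
    (hg : Continuous (deriv b)) (hG : Continuous (iteratedDeriv (N+1) b))
    (htay : ∀ t : ℝ, 0 < t →
      ∃ ξ ∈ Ioo 0 t, deriv b t = iteratedDeriv (N+1) b ξ * t ^ N / N.factorial)
    (hd0 : deriv b 0 = 0)
    (hnd : 0 < iteratedDeriv (N + 1) b 0)
    (hmono : ∀ y ∈ Ioc (0 : ℝ) σ, 0 < deriv b y) :
    ∃ a A : ℝ, 0 < a ∧ 0 < A ∧ ∀ t ∈ Icc (0:ℝ) σ,
      a * t ^ N ≤ deriv b t ∧ deriv b t ≤ A * t ^ N := by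
  set G := iteratedDeriv (N+1) b with hGdef
  -- find δ with G ≥ G 0 / 2 on [0, δ]
  obtain ⟨δ, hδpos, hδ⟩ : ∃ δ > 0, ∀ ξ ∈ Icc (0:ℝ) δ, G 0 / 2 ≤ G ξ ∧ G ξ ≤ 2 * G 0 := by
    have : ∀ᶠ ξ in nhds (0:ℝ), |G ξ - G 0| < G 0 / 2 := by
      have := hG.continuousAt (x := 0)
      rw [Metric.continuousAt_iff] at this
      obtain ⟨δ, hδ, h⟩ := this (G 0 / 2) (by linarith)
      filter_upwards [Metric.ball_mem_nhds 0 hδ] with ξ hξ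
      simpa [Real.dist_eq] using h hξ
    obtain ⟨δ, hδ, h⟩ := Metric.eventually_nhds_iff.mp this
    refine ⟨δ/2, by linarith, fun ξ hξ => ?_⟩
    have : |G ξ - G 0| < G 0 / 2 := by
      apply h
      rw [Real.dist_eq]
      rw [mem_Icc] at hξ
      rw [abs_of_nonneg (by linarith [hξ.1])]
      linarith [hξ.2]
    have := abs_lt.mp this
    constructor <;> linarith [this.1, this.2]
  set δ' := min δ σ with hδ'def
  have hδ'pos : 0 < δ' := lt_min hδpos hσ
  have hδ'σ : δ' ≤ σ := min_le_right _ _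
  -- bounds on [δ', σ] by compactness
  have hcomp : IsCompact (Icc δ' σ) := isCompact_Icc
  have hne : (Icc δ' σ).Nonempty := nonempty_Icc.mpr hδ'σ
  obtain ⟨tm, htm, htmin⟩ := hcomp.exists_isMinOn hne hg.continuousOn
  obtain ⟨tM, htM, htmax⟩ := hcomp.exists_isMaxOn hne hg.continuousOn
  have hmin_pos : 0 < deriv b tm := hmono tm ⟨lt_of_lt_of_le hδ'pos htm.1, htm.2⟩
  have hmax_pos : 0 < deriv b tM := hmono tM ⟨lt_of_lt_of_le hδ'pos htM.1, htM.2⟩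
  have hNfac : (0:ℝ) < N.factorial := by positivity
  refine ⟨min (G 0 / (2 * N.factorial)) (deriv b tm / σ ^ N),
          max (2 * G 0 / N.factorial) (deriv b tM / δ' ^ N), ?_, ?_, ?_⟩
  · apply lt_min <;> positivity
  · apply lt_max_of_lt_left; positivity
  intro t ⟨ht0, htσ⟩
  rcases eq_or_lt_of_le ht0 with h | h
  · rw [← h, hd0, zero_pow (by omega : N ≠ 0)]
    simp
  rcases le_or_gt t δ' with hc | hc
  · -- use Taylor
    obtain ⟨ξ, hξ, heq⟩ := htay t h
    have hξδ : ξ ∈ Icc (0:ℝ) δ := ⟨hξ.1.le, le_trans hξ.2.le (le_trans hc (min_le_left _ _))⟩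
    obtain ⟨hl, hr⟩ := hδ ξ hξδ
    constructor
    · apply le_trans (mul_le_mul_of_nonneg_right (min_le_left _ _) (by positivity))
      rw [heq, div_mul_eq_mul_div, div_le_div_iff₀ (by positivity) hNfac]
      nlinarith [mul_le_mul_of_nonneg_right hl (pow_nonneg ht0 N), hNfac]
    · apply le_trans ?_ (mul_le_mul_of_nonneg_right (le_max_left _ _) (by positivity))
      rw [heq, div_mul_eq_mul_div, div_le_div_iff₀ hNfac (by positivity)]
      nlinarith [mul_le_mul_of_nonneg_right hr (pow_nonneg ht0 N), hNfac]
  · -- use compactness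
    have htI : t ∈ Icc δ' σ := ⟨hc.le, htσ⟩
    constructor
    · apply le_trans (mul_le_mul_of_nonneg_right (min_le_right _ _) (by positivity))
      rw [div_mul_eq_mul_div, div_le_iff₀ (by positivity)]
      have h1 : deriv b tm ≤ deriv b t := htmin htI
      have h2 : t ^ N ≤ σ ^ N := pow_le_pow_left₀ ht0 htσ N
      have hdt := hmono t ⟨lt_of_lt_of_le hδ'pos hc.le, htσ⟩
      nlinarith [mul_le_mul_of_nonneg_right h1 (pow_nonneg ht0 N),
        mul_le_mul_of_nonneg_left h2 hdt.le]
    · apply le_trans ?_ (mul_le_mul_of_nonneg_right (le_max_right _ _) (by positivity))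
      rw [div_mul_eq_mul_div, le_div_iff₀ (by positivity)]
      have h1 : deriv b t ≤ deriv b tM := htmax htI
      have h2 : δ' ^ N ≤ t ^ N := pow_le_pow_left₀ hδ'pos.le hc.le N
      have hdt := hmono t ⟨lt_of_lt_of_le hδ'pos hc.le, htσ⟩
      nlinarith [mul_le_mul_of_nonneg_left h2 hdt.le,
        mul_le_mul_of_nonneg_right h1 (pow_nonneg ht0 N)]

theorem powSubBounds (N : ℕ) {x y : ℝ} (hx : 0 ≤ x) (hxy : x ≤ y) :
    (y - x) * y ^ N ≤ y ^ (N+1) - x ^ (N+1) ∧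
    y ^ (N+1) - x ^ (N+1) ≤ (N+1 : ℝ) * ((y - x) * y ^ N) := by
  have hy : 0 ≤ y := hx.trans hxy
  have key : y ^ (N+1) - x ^ (N+1)
      = (∑ i ∈ Finset.range (N+1), y ^ i * x ^ (N - i)) * (y - x) := by
    rw [← geom_sum₂_mul y x (N+1)]
    norm_num
  have hub : (∑ i ∈ Finset.range (N+1), y ^ i * x ^ (N - i)) ≤ (N+1 : ℝ) * y ^ N := by
    calc (∑ i ∈ Finset.range (N+1), y ^ i * x ^ (N - i))
        ≤ ∑ _i ∈ Finset.range (N+1), y ^ N := by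
          apply Finset.sum_le_sum
          intro i hi
          have hiN : i ≤ N := Nat.lt_succ_iff.mp (Finset.mem_range.mp hi)
          calc y ^ i * x ^ (N - i) ≤ y ^ i * y ^ (N - i) :=
                mul_le_mul_of_nonneg_left (pow_le_pow_left₀ hx hxy _) (pow_nonneg hy i)
            _ = y ^ N := by rw [← pow_add]; congr 1; omega
      _ = (N+1 : ℝ) * y ^ N := by
          rw [Finset.sum_const, Finset.card_range, nsmul_eq_mul]; push_cast; ring
  have hlb : y ^ N ≤ (∑ i ∈ Finset.range (N+1), y ^ i * x ^ (N - i)) := by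
    have h0 : y ^ N * x ^ (N - N) = y ^ N := by simp
    calc y ^ N = y ^ N * x ^ (N - N) := h0.symm
      _ ≤ ∑ i ∈ Finset.range (N+1), y ^ i * x ^ (N - i) :=
          Finset.single_le_sum (f := fun i => y ^ i * x ^ (N - i))
            (fun i _ => mul_nonneg (pow_nonneg hy i) (pow_nonneg hx _))
            (Finset.self_mem_range_succ N)
  constructor
  · rw [key]
    calc (y - x) * y ^ N = y ^ N * (y - x) := by ring
      _ ≤ _ := mul_le_mul_of_nonneg_right hlb (by linarith)
  · rw [key]
    calc (∑ i ∈ Finset.range (N+1), y ^ i * x ^ (N - i)) * (y - x)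
        ≤ ((N+1 : ℝ) * y ^ N) * (y - x) := mul_le_mul_of_nonneg_right hub (by linarith)
      _ = (N+1 : ℝ) * ((y - x) * y ^ N) := by ring

theorem diffBounds (N : ℕ) (σ : ℝ) (b : ℝ → ℝ) (hb : ContDiff ℝ (⊤:ℕ∞) b)
    (a A : ℝ) (ha : 0 < a) (hA : 0 < A)
    (hder : ∀ t ∈ Icc (0:ℝ) σ, a * t ^ N ≤ deriv b t ∧ deriv b t ≤ A * t ^ N)
    {x y : ℝ} (hx : 0 ≤ x) (hxy : x ≤ y) (hy : y ≤ σ) :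
    a / (N+1 : ℝ) * ((y - x) * y ^ N) ≤ b y - b x ∧
    b y - b x ≤ A * ((y - x) * y ^ N) := by
  have hderiv : ∀ t ∈ uIcc x y, HasDerivAt b (deriv b t) t := fun t _ =>
    (hb.differentiable (by simp)).differentiableAt.hasDerivAt
  have hcont : Continuous (deriv b) := hb.continuous_deriv (by exact_mod_cast le_top)
  have hint : IntervalIntegrable (deriv b) MeasureTheory.volume x y :=
    hcont.intervalIntegrable x y
  have heq : ∫ t in x..y, deriv b t = b y - b x :=
    intervalIntegral.integral_eq_sub_of_hasDerivAt hderiv hint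
  have hsub : Icc x y ⊆ Icc 0 σ := Icc_subset_Icc hx hy
  have hlow : ∫ t in x..y, a * t ^ N ≤ ∫ t in x..y, deriv b t := by
    apply intervalIntegral.integral_mono_on hxy
      ((continuous_const.mul (continuous_pow N)).intervalIntegrable x y) hint
    intro t ht
    exact (hder t (hsub ht)).1
  have hhigh : ∫ t in x..y, deriv b t ≤ ∫ t in x..y, A * t ^ N := by
    apply intervalIntegral.integral_mono_on hxy hint
      ((continuous_const.mul (continuous_pow N)).intervalIntegrable x y)
    intro t ht
    exact (hder t (hsub ht)).2
  have hpint : ∀ c : ℝ, ∫ t in x..y, c * t ^ N = c * ((y ^ (N+1) - x ^ (N+1)) / (N+1)) := by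
    intro c
    rw [intervalIntegral.integral_const_mul, integral_pow]
  obtain ⟨hp1, hp2⟩ := powSubBounds N hx hxy
  have hN1 : (0:ℝ) < (N:ℝ) + 1 := by positivity
  constructor
  · rw [← heq]
    refine le_trans ?_ hlow
    rw [hpint]
    rw [div_mul_eq_mul_div, mul_div_assoc a]
    apply mul_le_mul_of_nonneg_left _ ha.le
    rw [div_le_div_iff₀ hN1 hN1]
    · nlinarith
  · rw [← heq]
    refine le_trans hhigh ?_
    rw [hpint]
    apply mul_le_mul_of_nonneg_left _ hA.le
    rw [div_le_iff₀ hN1]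
    nlinarith

theorem chunkLB (f : ℝ → ℝ) (hf : Continuous f) (hf0 : ∀ x, 0 ≤ f x) {z u v y m : ℝ}
    (hzu : z ≤ u) (huv : u ≤ v) (hvy : v ≤ y) (hm : 0 ≤ m)
    (hbound : ∀ x ∈ Icc u v, m ≤ f x) :
    m * (v - u) ≤ ∫ x in z..y, f x := by
  have hi : ∀ p q : ℝ, IntervalIntegrable f volume p q := fun p q => hf.intervalIntegrable p q
  have e1 : (∫ x in z..u, f x) + ∫ x in u..y, f x = ∫ x in z..y, f x :=
    intervalIntegral.integral_add_adjacent_intervals (hi z u) (hi u y)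
  have e2 : (∫ x in u..v, f x) + ∫ x in v..y, f x = ∫ x in u..y, f x :=
    intervalIntegral.integral_add_adjacent_intervals (hi u v) (hi v y)
  have n1 : 0 ≤ ∫ x in z..u, f x := intervalIntegral.integral_nonneg hzu fun x _ => hf0 x
  have n2 : 0 ≤ ∫ x in v..y, f x := intervalIntegral.integral_nonneg hvy fun x _ => hf0 x
  have hmid : m * (v - u) ≤ ∫ x in u..v, f x := by
    have : (∫ _x in u..v, m) ≤ ∫ x in u..v, f x :=
      intervalIntegral.integral_mono_on huv (intervalIntegrable_const) (hi u v) hbound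
    rwa [intervalIntegral.integral_const, smul_eq_mul, mul_comm] at this
  linarith

theorem coreIneq (a' A K dx wx dt wt Px Pt : ℝ) (N : ℕ) (ha' : 0 < a') (hA : 0 < A)
    (hK : K = a' / (2 ^ (N + 1) * A))
    (hx : a' * (dx * wx ^ N) ≤ Px)
    (ht : Pt ≤ A * (dt * wt ^ N))
    (hd : dt ≤ 2 * dx) (hdt : 0 ≤ dt)
    (hw : wt ≤ 2 * wx) (hwt : 0 ≤ wt) :
    K * Pt ≤ Px := by
  have h2 : (0:ℝ) < 2 ^ (N + 1) := by positivity
  have hKpos : 0 < K := by rw [hK]; positivity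
  have hwx : wt ^ N ≤ (2 * wx) ^ N := pow_le_pow_left₀ hwt hw N
  have hdx : 0 ≤ dx := by linarith
  have h1 : dt * wt ^ N ≤ (2 * dx) * ((2 * wx) ^ N) :=
    mul_le_mul hd hwx (pow_nonneg hwt N) (by linarith)
  have h3 : (2 * dx) * ((2 * wx) ^ N) = 2 ^ (N + 1) * (dx * wx ^ N) := by
    rw [mul_pow, pow_succ]; ring
  calc K * Pt ≤ K * (A * (dt * wt ^ N)) :=
        mul_le_mul_of_nonneg_left ht hKpos.le
    _ = a' / 2 ^ (N + 1) * (dt * wt ^ N) := by rw [hK]; field_simp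
    _ ≤ a' / 2 ^ (N + 1) * (2 ^ (N + 1) * (dx * wx ^ N)) := by
        rw [← h3]; exact mul_le_mul_of_nonneg_left h1 (by positivity)
    _ = a' * (dx * wx ^ N) := by field_simp
    _ ≤ Px := hx

theorem sqrtKey {K P1 P2 : ℝ} (hK : 0 ≤ K) (h : K * P1 ≤ P2) :
    Real.sqrt K * Real.sqrt P1 ≤ Real.sqrt P2 := by
  rw [← Real.sqrt_mul hK]
  exact Real.sqrt_le_sqrt h

set_option maxHeartbeats 2000000 in
/-- One-sided case of Lemma A.5 (lemlow): Agmon-distance lower bound near a critical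
point of odd order `N` at `0` with `b ≥ 0` nearby. For every `λ ∈ (0, b(σ)]` and
`0 ≤ z ≤ y ≤ σ`:
`∫_z^y |b(x)-λ|^{1/2} dx ≥ c |y-z| (|b(y)-λ|^{1/2} + |b(z)-λ|^{1/2})`. -/
theorem stmt15 (N : ℕ) (hNodd : Odd N) (hN1 : 1 ≤ N) (σ : ℝ) (hσ : 0 < σ)
    (b : ℝ → ℝ) (hb : ContDiff ℝ (⊤ : ℕ∞) b) (hb0 : b 0 = 0)
    (hcrit : ∀ k, 1 ≤ k → k ≤ N → iteratedDeriv k b 0 = 0)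
    (hnd : 0 < iteratedDeriv (N + 1) b 0)
    (hpos : ∀ y ∈ Icc (-σ) σ, y ≠ 0 → 0 < b y)
    (hmono : ∀ y ∈ Ioc (0 : ℝ) σ, 0 < deriv b y) :
    ∃ c : ℝ, 0 < c ∧ ∀ lam ∈ Ioc (0 : ℝ) (b σ), ∀ z y : ℝ,
      0 ≤ z → z ≤ y → y ≤ σ →
      c * |y - z| * (Real.sqrt |b y - lam| + Real.sqrt |b z - lam|)
        ≤ ∫ x in z..y, Real.sqrt |b x - lam| := by
  have hbi : ContDiff ℝ (⊤:ℕ∞) b := hb.of_le (by simp)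
  have hd0 : deriv b 0 = 0 := by
    have := hcrit 1 le_rfl hN1
    rwa [iteratedDeriv_one] at this
  obtain ⟨a, A, ha, hA, hder⟩ := derivBounds N hN1 σ hσ b
    (hbi.continuous_deriv (by exact_mod_cast le_top))
    (hbi.continuous_iteratedDeriv (N+1) (by exact_mod_cast le_top))
    (fun t ht => tay N hN1 b hbi hcrit ht) hd0 hnd hmono
  obtain ⟨a', ha'def⟩ : ∃ a' : ℝ, a' = a / (N+1 : ℝ) := ⟨_, rfl⟩
  have ha' : 0 < a' := by rw [ha'def]; positivity
  have key : ∀ x y : ℝ, 0 ≤ x → x ≤ y → y ≤ σ →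
      a' * ((y - x) * y ^ N) ≤ b y - b x ∧ b y - b x ≤ A * ((y - x) * y ^ N) := by
    intro x y hx hxy hy
    rw [ha'def]
    exact diffBounds N σ b hbi a A ha hA hder hx hxy hy
  have hbmono : ∀ x y : ℝ, 0 ≤ x → x ≤ y → y ≤ σ → b x ≤ b y := by
    intro x y hx hxy hy
    have := (key x y hx hxy hy).1
    nlinarith [mul_nonneg ha'.le (mul_nonneg (sub_nonneg.mpr hxy)
      (pow_nonneg (hx.trans hxy) N))]
  obtain ⟨K, hKdef⟩ : ∃ K : ℝ, K = a' / (2 ^ (N + 1) * A) := ⟨_, rfl⟩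
  have hKpos : 0 < K := by rw [hKdef]; positivity
  obtain ⟨κ, hκdef⟩ : ∃ κ : ℝ, κ = Real.sqrt K := ⟨_, rfl⟩
  have hκpos : 0 < κ := by rw [hκdef]; exact Real.sqrt_pos.mpr hKpos
  have hκ1 : κ ≤ 1 := by
    have hσN : (0:ℝ) < σ ^ N := pow_pos hσ N
    have h1 : a' * (σ * σ ^ N) ≤ b σ - b 0 := by
      have := (key 0 σ le_rfl hσ.le le_rfl).1
      simpa using this
    have h2 : b σ - b 0 ≤ A * (σ * σ ^ N) := by
      have := (key 0 σ le_rfl hσ.le le_rfl).2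
      simpa using this
    have haA : a' ≤ A := by nlinarith [mul_pos hσ hσN]
    have h2N : (1:ℝ) ≤ 2 ^ (N + 1) := one_le_pow₀ (by norm_num : (1:ℝ) ≤ 2)
    have hK1 : K ≤ 1 := by
      rw [hKdef, div_le_one (by positivity)]
      nlinarith
    calc κ = Real.sqrt K := hκdef
      _ ≤ Real.sqrt 1 := Real.sqrt_le_sqrt hK1
      _ = 1 := Real.sqrt_one
  refine ⟨κ / 16, by positivity, ?_⟩
  rintro lam ⟨hlam0, hlamσ⟩ z y hz hzy hyσ
  obtain ⟨yc, hycI, hyc⟩ : ∃ yc ∈ Icc (0:ℝ) σ, b yc = lam := by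
    have := intermediate_value_Icc hσ.le hbi.continuous.continuousOn
    exact this (by rw [hb0]; exact ⟨hlam0.le, hlamσ⟩)
  obtain ⟨hyc0, hycσ⟩ := hycI
  have hycpos : 0 < yc := by
    rcases eq_or_lt_of_le hyc0 with h | h
    · exfalso; rw [← h, hb0] at hyc; linarith
    · exact h
  obtain ⟨F, hF⟩ : ∃ F : ℝ → ℝ, F = fun s => Real.sqrt |b s - lam| := ⟨_, rfl⟩
  have hFx : ∀ x, F x = Real.sqrt |b x - lam| := fun x => by rw [hF]
  have hFcont : Continuous F := by
    rw [hF]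
    exact Real.continuous_sqrt.comp (continuous_abs.comp (hbi.continuous.sub continuous_const))
  have hF0 : ∀ x, 0 ≤ F x := fun x => by rw [hFx]; exact Real.sqrt_nonneg _
  -- abs unfolding
  have habsL : ∀ x, 0 ≤ x → x ≤ σ → x ≤ yc → |b x - lam| = b yc - b x := by
    intro x h0 h1 h2
    rw [← hyc, abs_sub_comm, abs_of_nonneg (by linarith [hbmono x yc h0 h2 hycσ])]
  have habsR : ∀ x, 0 ≤ x → x ≤ σ → yc ≤ x → |b x - lam| = b x - b yc := by
    intro x h0 h1 h2
    rw [← hyc, abs_of_nonneg (by linarith [hbmono yc x hyc0 h2 h1])]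
  -- generic conclusion helper
  have main : ∀ t : ℝ, (∃ u v : ℝ, z ≤ u ∧ u ≤ v ∧ v ≤ y ∧ (y - z) / 8 ≤ v - u ∧
      ∀ x ∈ Icc u v, κ * F t ≤ F x) →
      κ / 8 * (y - z) * F t ≤ ∫ x in z..y, F x := by
    rintro t ⟨u, v, hzu, huv, hvy, hlen, hpt⟩
    have hmn : 0 ≤ κ * F t := mul_nonneg hκpos.le (hF0 t)
    have hch := chunkLB F hFcont hF0 hzu huv hvy hmn hpt
    calc κ / 8 * (y - z) * F t = (κ * F t) * ((y - z) / 8) := by ring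
      _ ≤ (κ * F t) * (v - u) := mul_le_mul_of_nonneg_left hlen hmn
      _ ≤ _ := hch
  -- pointwise reduction
  have red : ∀ t x : ℝ, K * |b t - lam| ≤ |b x - lam| → κ * F t ≤ F x := by
    intro t x h
    rw [hFx t, hFx x, hκdef]
    exact sqrtKey hKpos.le h
  -- Claim Y
  have claimY : κ / 8 * (y - z) * F y ≤ ∫ x in z..y, F x := by
    apply main
    rcases le_or_gt y yc with hcase | hcase
    · refine ⟨z, y, le_rfl, hzy, le_rfl, by linarith, ?_⟩
      rintro x ⟨hx1, hx2⟩
      have h1 : |b y - lam| ≤ |b x - lam| := by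
        rw [habsL x (by linarith) (by linarith) (by linarith),
            habsL y (by linarith) hyσ hcase]
        have := hbmono x y (by linarith) hx2 hyσ
        linarith
      calc κ * F y ≤ 1 * F y := mul_le_mul_of_nonneg_right hκ1 (hF0 y)
        _ = F y := one_mul _
        _ ≤ F x := by rw [hFx y, hFx x]; exact Real.sqrt_le_sqrt h1
    · -- y > yc
      have hmz : z ≤ max z yc := le_max_left _ _
      have hmyc : yc ≤ max z yc := le_max_right _ _
      have hmy : max z yc ≤ y := max_le hzy hcase.le
      rcases le_or_gt ((y - z) / 4) (y - max z yc) with hc | hc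
      · -- Y2a
        refine ⟨(y + max z yc) / 2, y, by linarith, by linarith, le_rfl, by linarith, ?_⟩
        rintro x ⟨hx1, hx2⟩
        apply red
        have hxyc : yc ≤ x := by linarith
        have hx0 : (0:ℝ) ≤ x := by linarith [hycpos.le]
        have hkx := (key yc x hyc0 hxyc (by linarith)).1
        have hky := (key yc y hyc0 hcase.le hyσ).2
        rw [habsR x hx0 (by linarith) hxyc, habsR y (by linarith) hyσ hcase.le]
        exact coreIneq a' A K (x - yc) x (y - yc) y _ _ N ha' hA hKdef hkx hky
          (by linarith) (by linarith) (by linarith) (by linarith)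
      · -- Y2b
        have hzyc : z < yc := by
          by_contra hcon
          push_neg at hcon
          rw [max_eq_left hcon] at hc
          linarith
        rw [max_eq_right hzyc.le] at hc
        refine ⟨z, z + (y - z) / 2, le_rfl, by linarith, by linarith, by linarith, ?_⟩
        rintro x ⟨hx1, hx2⟩
        apply red
        have hxyc : x ≤ yc := by linarith
        have hx0 : (0:ℝ) ≤ x := by linarith
        have hkx := (key x yc hx0 hxyc hycσ).1
        have hky := (key yc y hyc0 hcase.le hyσ).2
        rw [habsL x hx0 (by linarith) hxyc, habsR y (by linarith) hyσ hcase.le]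
        have hky' : b y - b yc ≤ A * ((y - z) / 4 * y ^ N) := by
          have hyN : (0:ℝ) ≤ y ^ N := pow_nonneg (by linarith) N
          have step : (y - yc) * y ^ N ≤ (y - z) / 4 * y ^ N :=
            mul_le_mul_of_nonneg_right hc.le hyN
          linarith [mul_le_mul_of_nonneg_left step hA.le]
        exact coreIneq a' A K (yc - x) yc ((y - z) / 4) y _ _ N ha' hA hKdef hkx hky'
          (by linarith) (by linarith) (by linarith) (by linarith)
  -- Claim Z
  have claimZ : κ / 8 * (y - z) * F z ≤ ∫ x in z..y, F x := by
    apply main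
    rcases le_or_gt yc z with hcase | hcase
    · refine ⟨z, y, le_rfl, hzy, le_rfl, by linarith, ?_⟩
      rintro x ⟨hx1, hx2⟩
      have h1 : |b z - lam| ≤ |b x - lam| := by
        rw [habsR x (by linarith) (by linarith) (by linarith),
            habsR z hz (by linarith) hcase]
        have := hbmono z x hz hx1 (by linarith)
        linarith
      calc κ * F z ≤ 1 * F z := mul_le_mul_of_nonneg_right hκ1 (hF0 z)
        _ = F z := one_mul _
        _ ≤ F x := by rw [hFx z, hFx x]; exact Real.sqrt_le_sqrt h1
    · rcases le_or_gt ((y - z) / 2) (yc - z) with hc | hc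
      · -- Z2a
        refine ⟨z, z + (y - z) / 4, le_rfl, by linarith, by linarith, by linarith, ?_⟩
        rintro x ⟨hx1, hx2⟩
        apply red
        have hxyc : x ≤ yc := by linarith
        have hx0 : (0:ℝ) ≤ x := by linarith
        have hkx := (key x yc hx0 hxyc hycσ).1
        have hkz := (key z yc hz hcase.le hycσ).2
        rw [habsL x hx0 (by linarith) hxyc, habsL z hz (by linarith) hcase.le]
        exact coreIneq a' A K (yc - x) yc (yc - z) yc _ _ N ha' hA hKdef hkx hkz
          (by linarith) (by linarith) (by linarith [hycpos.le]) (by linarith [hycpos.le])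
      · -- Z2b
        have hycy : yc ≤ y := by linarith
        refine ⟨z + 3 * (y - z) / 4, y, by linarith, by linarith, le_rfl, by linarith, ?_⟩
        rintro x ⟨hx1, hx2⟩
        apply red
        have hxyc : yc ≤ x := by linarith
        have hx0 : (0:ℝ) ≤ x := by linarith
        have hkx := (key yc x hyc0 hxyc (by linarith)).1
        have hkz := (key z yc hz hcase.le hycσ).2
        rw [habsR x hx0 (by linarith) hxyc, habsL z hz (by linarith) hcase.le]
        have hkz' : b yc - b z ≤ A * ((y - z) / 2 * y ^ N) := by
          have hycN : yc ^ N ≤ y ^ N := pow_le_pow_left₀ hyc0 hycy N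
          have hyN : (0:ℝ) ≤ y ^ N := pow_nonneg (by linarith) N
          have s1 : (yc - z) * yc ^ N ≤ (yc - z) * y ^ N :=
            mul_le_mul_of_nonneg_left hycN (by linarith)
          have s2 : (yc - z) * y ^ N ≤ (y - z) / 2 * y ^ N :=
            mul_le_mul_of_nonneg_right hc.le hyN
          linarith [mul_le_mul_of_nonneg_left (s1.trans s2) hA.le]
        exact coreIneq a' A K (x - yc) x ((y - z) / 2) y _ _ N ha' hA hKdef hkx hkz'
          (by linarith) (by linarith) (by linarith) (by linarith)
  -- conclude
  simp only [hF] at claimY claimZ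
  rw [abs_of_nonneg (show (0:ℝ) ≤ y - z by linarith)]
  linarith
end

section
/- Let $b(y) = y^2$ on $\mathbb{R}$ and $\lambda \geq 0$ with $y_c = \sqrt{\lambda}$. Then there exists an absolute constant $c > 0$ such that for all real $z \leq y$: $\int_z^y |x^2 - \lambda|^{1/2} \, dx \geq c \, |y - z| \left( |y^2 - \lambda|^{1/2} + |z^2 - \lambda|^{1/2} \right)$. -/
open MeasureTheory Filter

noncomputable def Fa : ℝ → ℝ := fun u => (2/3) * (u * Real.sqrt |u|)

lemma cont_sqrtabs : Continuous (fun u : ℝ => Real.sqrt |u|) :=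
  Real.continuous_sqrt.comp continuous_abs

lemma hasDeriv_Fa (u : ℝ) : HasDerivAt Fa (Real.sqrt |u|) u := by
  rcases lt_trichotomy u 0 with hu | hu | hu
  · have hs : 0 < Real.sqrt (-u) := Real.sqrt_pos.2 (by linarith)
    have hsq : HasDerivAt (fun x : ℝ => Real.sqrt (-x)) (-(1 / (2 * Real.sqrt (-u)))) u := by
      have h1 : HasDerivAt Real.sqrt (1 / (2 * Real.sqrt (-u))) (-u) :=
        Real.hasDerivAt_sqrt (by linarith)
      have h2 : HasDerivAt (fun x : ℝ => -x) (-1) u := (hasDerivAt_id u).neg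
      simpa [Function.comp_def] using h1.comp u h2
    have h : HasDerivAt (fun x : ℝ => (2/3) * (x * Real.sqrt (-x))) (Real.sqrt (-u)) u := by
      have := ((hasDerivAt_id u).mul hsq).const_mul (2/3 : ℝ)
      refine this.congr_deriv ?_
      symm
      have hs2 : Real.sqrt (-u) ^ 2 = -u := Real.sq_sqrt (by linarith)
      have hu' : u = -(Real.sqrt (-u))^2 := by linarith
      simp only [id]; field_simp; linarith [hs2]
    have heq : Fa =ᶠ[nhds u] (fun x : ℝ => (2/3) * (x * Real.sqrt (-x))) := by
      filter_upwards [Iio_mem_nhds hu] with x hx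
      simp [Fa, abs_of_neg (show x < 0 from hx)]
    rw [show Real.sqrt |u| = Real.sqrt (-u) by rw [abs_of_neg hu]]
    exact h.congr_of_eventuallyEq heq
  · subst hu
    rw [hasDerivAt_iff_tendsto_slope]
    have h1 : Tendsto (fun x : ℝ => (2/3) * Real.sqrt |x|) (nhdsWithin 0 {(0:ℝ)}ᶜ) (nhds (Real.sqrt |(0:ℝ)|)) := by
      have := (cont_sqrtabs.continuousAt (x := (0:ℝ))).tendsto.const_mul (2/3 : ℝ)
      simp only [abs_zero, Real.sqrt_zero, mul_zero] at this ⊢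
      simpa using this.mono_left nhdsWithin_le_nhds
    refine h1.congr' ?_
    filter_upwards [self_mem_nhdsWithin] with x hx
    have hx0 : x ≠ 0 := hx
    simp only [slope, Fa, Real.sqrt_zero, abs_zero, mul_zero, zero_mul, sub_zero, vsub_eq_sub]
    field_simp
    rw [smul_eq_mul]
    field_simp
  · have hs : 0 < Real.sqrt u := Real.sqrt_pos.2 hu
    have h : HasDerivAt (fun x : ℝ => (2/3) * (x * Real.sqrt x)) (Real.sqrt u) u := by
      have := ((hasDerivAt_id u).mul (Real.hasDerivAt_sqrt (ne_of_gt hu))).const_mul (2/3 : ℝ)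
      refine this.congr_deriv ?_
      symm
      have hs2 : Real.sqrt u ^ 2 = u := Real.sq_sqrt hu.le
      simp only [id]
      field_simp
      nlinarith [hs2]
    have heq : Fa =ᶠ[nhds u] (fun x : ℝ => (2/3) * (x * Real.sqrt x)) := by
      filter_upwards [Ioi_mem_nhds hu] with x hx
      simp [Fa, abs_of_pos (show 0 < x from hx)]
    rw [show Real.sqrt |u| = Real.sqrt u by rw [abs_of_pos hu]]
    exact h.congr_of_eventuallyEq heq

lemma integral_sqrtabs (a b : ℝ) : ∫ u in a..b, Real.sqrt |u| = Fa b - Fa a :=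
  intervalIntegral.integral_eq_sub_of_hasDerivAt (fun u _ => hasDeriv_Fa u)
    (cont_sqrtabs.intervalIntegrable a b)

lemma LS (a b : ℝ) (hab : a ≤ b) :
    1/2 * (b - a) * Real.sqrt |b| ≤ ∫ u in a..b, Real.sqrt |u| := by
  rw [integral_sqrtabs]
  have hA : 0 ≤ Real.sqrt |a| := Real.sqrt_nonneg _
  have hB : 0 ≤ Real.sqrt |b| := Real.sqrt_nonneg _
  have hA2 : Real.sqrt |a| ^ 2 = |a| := Real.sq_sqrt (abs_nonneg a)
  have hB2 : Real.sqrt |b| ^ 2 = |b| := Real.sq_sqrt (abs_nonneg b)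
  set A := Real.sqrt |a| with hAdef
  set B := Real.sqrt |b| with hBdef
  unfold Fa
  rcases le_or_gt 0 a with ha | ha
  · have hb : 0 ≤ b := le_trans ha hab
    rw [abs_of_nonneg ha] at hA2
    rw [abs_of_nonneg hb] at hB2
    -- a = A², b = B², A ≤ B
    have hAB : A ≤ B := by nlinarith
    nlinarith [mul_nonneg (mul_nonneg hA hA) (sub_nonneg.2 hAB), sq_nonneg (A + B),
      mul_nonneg (mul_nonneg hB hB) (sub_nonneg.2 hAB), sq_nonneg (A - B)]
  · rcases le_or_gt 0 b with hb | hb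
    · rw [abs_of_neg ha] at hA2
      rw [abs_of_nonneg hb] at hB2
      -- a = -A², b = B²
      nlinarith [mul_nonneg hA (sq_nonneg (2*A - B)), mul_nonneg hB (sq_nonneg (A - B)),
        mul_nonneg (mul_nonneg hA hB) hB]
    · rw [abs_of_neg ha] at hA2
      rw [abs_of_neg hb] at hB2
      -- a = -A², b = -B², B ≤ A
      have hBA : B ≤ A := by nlinarith
      nlinarith [mul_nonneg (sub_nonneg.2 hBA) (sq_nonneg (2*A + B)),
        mul_nonneg (mul_nonneg hA hB) (sub_nonneg.2 hBA), sq_nonneg (A - B)]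

lemma LSshift (t z y : ℝ) (hzy : z ≤ y) :
    1/2 * (y - z) * Real.sqrt |y + t| ≤ ∫ x in z..y, Real.sqrt |x + t| := by
  have := intervalIntegral.integral_comp_add_right (a := z) (b := y)
    (fun u : ℝ => Real.sqrt |u|) t
  rw [this]
  have := LS (z + t) (y + t) (by linarith)
  convert this using 2
  ring

lemma cont_f (r : ℝ) : Continuous (fun x : ℝ => Real.sqrt |x^2 - r^2|) :=
  Real.continuous_sqrt.comp (continuous_abs.comp (by continuity))

lemma intble_f (r z y : ℝ) : IntervalIntegrable (fun x : ℝ => Real.sqrt |x^2 - r^2|) volume z y :=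
  (cont_f r).intervalIntegrable z y

/-- Case A: `y ≤ r`. -/
lemma LA (r z y : ℝ) (hzy : z ≤ y) (hyr : y ≤ r) :
    1/2 * (y - z) * Real.sqrt |y^2 - r^2| ≤ ∫ x in z..y, Real.sqrt |x^2 - r^2| := by
  have key : ∀ x ∈ Set.Icc z y,
      Real.sqrt (r - y) * Real.sqrt |x + r| ≤ Real.sqrt |x^2 - r^2| := by
    intro x hx
    rw [← Real.sqrt_mul (by linarith : (0:ℝ) ≤ r - y)]
    apply Real.sqrt_le_sqrt
    have hid : |x^2 - r^2| = (r - x) * |x + r| := by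
      have h1 : x^2 - r^2 = (x - r) * (x + r) := by ring
      rw [h1, abs_mul, abs_of_nonpos (by linarith [hx.2] : x - r ≤ 0)]
      ring
    rw [hid]
    have h2 := abs_nonneg (x + r)
    have h3 : x ≤ y := hx.2
    nlinarith
  have hint1 : IntervalIntegrable (fun x : ℝ => Real.sqrt (r - y) * Real.sqrt |x + r|)
      volume z y := by
    apply Continuous.intervalIntegrable
    exact continuous_const.mul (Real.continuous_sqrt.comp (continuous_abs.comp (by continuity)))
  have step1 : ∫ x in z..y, Real.sqrt (r - y) * Real.sqrt |x + r|
      ≤ ∫ x in z..y, Real.sqrt |x^2 - r^2| :=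
    intervalIntegral.integral_mono_on hzy hint1 (intble_f r z y) key
  have step2 : Real.sqrt (r - y) * ∫ x in z..y, Real.sqrt |x + r|
      = ∫ x in z..y, Real.sqrt (r - y) * Real.sqrt |x + r| :=
    (intervalIntegral.integral_const_mul _ _).symm
  have step3 := LSshift r z y hzy
  have hfin : 1/2 * (y - z) * Real.sqrt |y^2 - r^2|
      = Real.sqrt (r - y) * (1/2 * (y - z) * Real.sqrt |y + r|) := by
    rw [show Real.sqrt (r - y) * (1/2 * (y - z) * Real.sqrt |y + r|)
        = 1/2 * (y - z) * (Real.sqrt (r - y) * Real.sqrt |y + r|) by ring,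
      ← Real.sqrt_mul (by linarith : (0:ℝ) ≤ r - y)]
    congr 2
    rw [show |y^2 - r^2| = |y - r| * |y + r| by rw [← abs_mul]; ring_nf,
      abs_of_nonpos (by linarith : y - r ≤ 0)]
    ring
  rw [hfin]
  calc Real.sqrt (r - y) * (1/2 * (y - z) * Real.sqrt |y + r|)
      ≤ Real.sqrt (r - y) * ∫ x in z..y, Real.sqrt |x + r| := by
        exact mul_le_mul_of_nonneg_left step3 (Real.sqrt_nonneg _)
    _ = ∫ x in z..y, Real.sqrt (r - y) * Real.sqrt |x + r| := step2
    _ ≤ ∫ x in z..y, Real.sqrt |x^2 - r^2| := step1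

/-- Case B: `0 ≤ r ≤ y` and `(y-r)/2 ≤ z`. -/
lemma LB (r z y : ℝ) (hr : 0 ≤ r) (hry : r ≤ y) (hz : (y - r)/2 ≤ z) (hzy : z ≤ y) :
    1/4 * (y - z) * Real.sqrt |y^2 - r^2| ≤ ∫ x in z..y, Real.sqrt |x^2 - r^2| := by
  have hyr0 : 0 ≤ y + r := by linarith
  have key : ∀ x ∈ Set.Icc z y,
      Real.sqrt ((y + r)/2) * Real.sqrt |x - r| ≤ Real.sqrt |x^2 - r^2| := by
    intro x hx
    rw [← Real.sqrt_mul (by linarith : (0:ℝ) ≤ (y + r)/2)]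
    apply Real.sqrt_le_sqrt
    have hid : |x^2 - r^2| = (x + r) * |x - r| := by
      have h1 : x^2 - r^2 = (x - r) * (x + r) := by ring
      rw [h1, abs_mul, abs_of_nonneg (by linarith [hx.1] : 0 ≤ x + r)]
      ring
    rw [hid]
    have h2 := abs_nonneg (x - r)
    have h3 : (y + r)/2 ≤ x + r := by linarith [hx.1]
    nlinarith
  have hint1 : IntervalIntegrable (fun x : ℝ => Real.sqrt ((y + r)/2) * Real.sqrt |x - r|)
      volume z y := by
    apply Continuous.intervalIntegrable
    exact continuous_const.mul (Real.continuous_sqrt.comp (continuous_abs.comp (by continuity)))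
  have step1 : ∫ x in z..y, Real.sqrt ((y + r)/2) * Real.sqrt |x - r|
      ≤ ∫ x in z..y, Real.sqrt |x^2 - r^2| :=
    intervalIntegral.integral_mono_on hzy hint1 (intble_f r z y) key
  have step2 : Real.sqrt ((y + r)/2) * ∫ x in z..y, Real.sqrt |x - r|
      = ∫ x in z..y, Real.sqrt ((y + r)/2) * Real.sqrt |x - r| :=
    (intervalIntegral.integral_const_mul _ _).symm
  have step3 : 1/2 * (y - z) * Real.sqrt |y - r| ≤ ∫ x in z..y, Real.sqrt |x - r| := by
    have := LSshift (-r) z y hzy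
    simpa [sub_eq_add_neg] using this
  have hfin : 1/4 * (y - z) * Real.sqrt |y^2 - r^2|
      ≤ Real.sqrt ((y + r)/2) * (1/2 * (y - z) * Real.sqrt |y - r|) := by
    have h1 : Real.sqrt ((y + r)/2) * Real.sqrt |y - r| = Real.sqrt ((y + r)/2 * |y - r|) :=
      (Real.sqrt_mul (by linarith) _).symm
    have h2 : (1/2 : ℝ) * Real.sqrt |y^2 - r^2| = Real.sqrt (|y^2 - r^2| / 4) := by
      rw [show |y^2 - r^2| / 4 = |y^2 - r^2| * (1/2)^2 by ring,
        Real.sqrt_mul (abs_nonneg _), Real.sqrt_sq (by norm_num : (0:ℝ) ≤ 1/2)]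
      ring
    have h3 : Real.sqrt (|y^2 - r^2| / 4) ≤ Real.sqrt ((y + r)/2 * |y - r|) := by
      apply Real.sqrt_le_sqrt
      have : |y^2 - r^2| = (y + r) * |y - r| := by
        rw [show y^2 - r^2 = (y - r) * (y + r) by ring, abs_mul,
          abs_of_nonneg (by linarith : 0 ≤ y + r)]
        ring
      rw [this]
      have := abs_nonneg (y - r)
      nlinarith
    calc 1/4 * (y - z) * Real.sqrt |y^2 - r^2|
        = 1/2 * (y - z) * ((1/2) * Real.sqrt |y^2 - r^2|) := by ring
      _ ≤ 1/2 * (y - z) * Real.sqrt ((y + r)/2 * |y - r|) := by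
          rw [h2]
          exact mul_le_mul_of_nonneg_left h3 (by nlinarith : (0:ℝ) ≤ 1/2 * (y - z))
      _ = Real.sqrt ((y + r)/2) * (1/2 * (y - z) * Real.sqrt |y - r|) := by
          rw [← h1]; ring
  calc 1/4 * (y - z) * Real.sqrt |y^2 - r^2|
      ≤ Real.sqrt ((y + r)/2) * (1/2 * (y - z) * Real.sqrt |y - r|) := hfin
    _ ≤ Real.sqrt ((y + r)/2) * ∫ x in z..y, Real.sqrt |x - r| :=
        mul_le_mul_of_nonneg_left step3 (Real.sqrt_nonneg _)
    _ = ∫ x in z..y, Real.sqrt ((y + r)/2) * Real.sqrt |x - r| := step2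
    _ ≤ ∫ x in z..y, Real.sqrt |x^2 - r^2| := step1

lemma int_nonneg_f (r z y : ℝ) (hzy : z ≤ y) : 0 ≤ ∫ x in z..y, Real.sqrt |x^2 - r^2| :=
  intervalIntegral.integral_nonneg hzy (fun x _ => Real.sqrt_nonneg _)

lemma int_mono_f (r z m y : ℝ) (hzm : z ≤ m) (hmy : m ≤ y) :
    (∫ x in m..y, Real.sqrt |x^2 - r^2|) ≤ ∫ x in z..y, Real.sqrt |x^2 - r^2| := by
  have := intervalIntegral.integral_add_adjacent_intervals
    (intble_f r z m) (intble_f r m y)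
  have h0 := int_nonneg_f r z m hzm
  linarith

/-- Case C: `0 ≤ r ≤ y`, `-y ≤ z`. -/
lemma LC (r z y : ℝ) (hr : 0 ≤ r) (hry : r ≤ y) (hz : -y ≤ z) (hzy : z ≤ y) :
    1/16 * (y - z) * Real.sqrt |y^2 - r^2| ≤ ∫ x in z..y, Real.sqrt |x^2 - r^2| := by
  have hB := Real.sqrt_nonneg |y^2 - r^2|
  rcases le_or_gt ((y - r)/2) z with h | h
  · have := LB r z y hr hry h hzy
    nlinarith
  · have hm1 : z ≤ (y - r)/2 := h.le
    have hm2 : (y - r)/2 ≤ y := by linarith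
    have h1 := LB r ((y - r)/2) y hr hry le_rfl hm2
    have h2 := int_mono_f r z ((y - r)/2) y hm1 hm2
    -- 1/4 * ((y+r)/2) * B ≥ 1/8 * y * B ≥ 1/16 * (y - z) * B  since y - z ≤ 2y
    have hyz : y - z ≤ 2 * y := by linarith
    nlinarith

/-- Case D: `0 ≤ r ≤ y`, `z ≤ -y`. -/
lemma LD (r z y : ℝ) (hr : 0 ≤ r) (hry : r ≤ y) (hz : z ≤ -y) :
    1/16 * (y - z) * Real.sqrt |y^2 - r^2| ≤ ∫ x in z..y, Real.sqrt |x^2 - r^2| := by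
  have hy0 : 0 ≤ y := le_trans hr hry
  have hB := Real.sqrt_nonneg |y^2 - r^2|
  have hsplit := intervalIntegral.integral_add_adjacent_intervals
    (intble_f r z (-y)) (intble_f r (-y) y)
  have h1 : 1/2 * (-y - z) * Real.sqrt |y^2 - r^2| ≤ ∫ x in z..(-y), Real.sqrt |x^2 - r^2| := by
    have := LA r z (-y) hz (by linarith)
    have habs : |(-y)^2 - r^2| = |y^2 - r^2| := by ring_nf
    rw [habs] at this
    exact this
  have h2 : 1/16 * (y - (-y)) * Real.sqrt |y^2 - r^2| ≤ ∫ x in (-y)..y, Real.sqrt |x^2 - r^2| :=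
    LC r (-y) y hr hry le_rfl (by linarith)
  nlinarith

/-- Full lower bound relative to the upper endpoint. -/
lemma Lmain (r z y : ℝ) (hr : 0 ≤ r) (hzy : z ≤ y) :
    1/16 * (y - z) * Real.sqrt |y^2 - r^2| ≤ ∫ x in z..y, Real.sqrt |x^2 - r^2| := by
  have hB := Real.sqrt_nonneg |y^2 - r^2|
  rcases le_or_gt y r with h | h
  · have := LA r z y hzy h
    nlinarith
  · rcases le_or_gt (-y) z with h2 | h2
    · exact LC r z y hr h.le h2 hzy
    · exact LD r z y hr h.le h2.le

/-- Lower bound relative to the lower endpoint, by reflection. -/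
lemma Lrefl (r z y : ℝ) (hr : 0 ≤ r) (hzy : z ≤ y) :
    1/16 * (y - z) * Real.sqrt |z^2 - r^2| ≤ ∫ x in z..y, Real.sqrt |x^2 - r^2| := by
  have hrefl : (∫ x in (-y)..(-z), Real.sqrt |x^2 - r^2|)
      = ∫ x in z..y, Real.sqrt |x^2 - r^2| := by
    have := intervalIntegral.integral_comp_neg (a := z) (b := y)
      (fun x : ℝ => Real.sqrt |x^2 - r^2|)
    rw [← this]
    apply intervalIntegral.integral_congr
    intro x _
    simp only
    ring_nf
  have := Lmain r (-y) (-z) hr (by linarith)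
  rw [hrefl] at this
  have habs : |(-z)^2 - r^2| = |z^2 - r^2| := by ring_nf
  rw [habs] at this
  convert this using 2
  ring


/-- Explicit model case of the Agmon-distance lower bound (Lemma A.5 / lemlow) for the
quadratic shear `b(y) = y²`: there is an absolute `c > 0` such that for all `λ ≥ 0`
and all `z ≤ y`:
`∫_z^y |x²-λ|^{1/2} dx ≥ c |y-z| (|y²-λ|^{1/2} + |z²-λ|^{1/2})`. -/
theorem stmt16 : ∃ c : ℝ, 0 < c ∧ ∀ lam : ℝ, 0 ≤ lam → ∀ z y : ℝ, z ≤ y →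
    c * |y - z| * (Real.sqrt |y ^ 2 - lam| + Real.sqrt |z ^ 2 - lam|)
      ≤ ∫ x in z..y, Real.sqrt |x ^ 2 - lam| := by
  refine ⟨1/32, by norm_num, ?_⟩
  intro lam hlam z y hzy
  set r := Real.sqrt lam with hrdef
  have hr : 0 ≤ r := Real.sqrt_nonneg _
  have hr2 : r^2 = lam := Real.sq_sqrt hlam
  have habs : |y - z| = y - z := abs_of_nonneg (by linarith)
  have h1 := Lmain r z y hr hzy
  have h2 := Lrefl r z y hr hzy
  rw [← hr2, habs]
  have hint : (∫ x in z..y, Real.sqrt |x ^ 2 - r ^ 2|)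
      = ∫ x in z..y, Real.sqrt |x^2 - r^2| := rfl
  rw [hint]
  nlinarith [Real.sqrt_nonneg |y^2 - r^2|, Real.sqrt_nonneg |z^2 - r^2|]
end
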